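/- arXiv:1803.01377 — 14 statements merged into one kernel-verified Lean document; each statement's English description precedes it below -/
import Mathlib

section
/- Let S be a semigroup, A an alphabet, and suppose there exists a universal sequence for S over A (i.e., a sequence of words w₁, w₂, … in the free semigroup A⁺ such that for every sequence s₁, s₂, … of elements of S there is a semigroup homomorphism φ : A⁺ → S with φ(wₙ) = sₙ for all n). Then for every countable alphabet B, a sequence (u₁, u₂, …) of words in B⁺ is universal for S if and only if the sequence (v₁, v₂, …) is universal for S, where vₘ is obtained from uₘ by replacing every occurrence of the letter bⱼ ∈ B by the word wⱼ ∈ A⁺. -/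
/-!
Substituting `w (e b)` for each letter `b` is a homomorphism `B⁺ → A⁺`, so universality of the
substituted sequence pulls back along it. Conversely, every homomorphism `φ : B⁺ → S` factors
through the substitution: universality of `w` gives `ψ : A⁺ → S` with `ψ (w (e b)) = φ b`
for all letters `b` (the indices `e b` being distinct), and then `ψ ∘ subst = φ`.
-/

/-- A sequence of words in the free semigroup over `A` is universal for a semigroup `S`
if every sequence of elements of `S` is the image of the words under a single
semigroup homomorphism. -/
def IsUniversal (S : Type*) [Semigroup S] {A : Type*} (w : ℕ → FreeSemigroup A) : Prop :=
  ∀ s : ℕ → S, ∃ φ : FreeSemigroup A →ₙ* S, ∀ n, φ (w n) = s n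

namespace IsUniversal

variable {S A B : Type*} [Semigroup S]

theorem of_map (f : FreeSemigroup B →ₙ* FreeSemigroup A) {u : ℕ → FreeSemigroup B}
    (h : IsUniversal S fun m => f (u m)) : IsUniversal S u := fun s => by
  obtain ⟨ψ, hψ⟩ := h s
  exact ⟨ψ.comp f, hψ⟩

theorem exists_comp_lift_eq [Nonempty S] {w : ℕ → FreeSemigroup A} (hw : IsUniversal S w)
    {e : B → ℕ} (he : e.Injective) (φ : FreeSemigroup B →ₙ* S) :
    ∃ ψ : FreeSemigroup A →ₙ* S, ψ.comp (FreeSemigroup.lift (w ∘ e)) = φ := by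
  obtain ⟨ψ, hψ⟩ := hw (Function.extend e (φ ∘ FreeSemigroup.of) fun _ => Classical.arbitrary S)
  refine ⟨ψ, FreeSemigroup.hom_ext (funext fun b => ?_)⟩
  simp only [Function.comp_apply, MulHom.comp_apply, FreeSemigroup.lift_of, hψ,
    he.extend_apply]

theorem map_lift {w : ℕ → FreeSemigroup A} (hw : IsUniversal S w) {e : B → ℕ}
    (he : e.Injective) {u : ℕ → FreeSemigroup B} (hu : IsUniversal S u) :
    IsUniversal S fun m => FreeSemigroup.lift (w ∘ e) (u m) := fun s => by
  have : Nonempty S := ⟨s 0⟩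
  obtain ⟨φ, hφ⟩ := hu s
  obtain ⟨ψ, hψφ⟩ := hw.exists_comp_lift_eq he φ
  exact ⟨ψ, fun m => by rw [← hφ, ← hψφ, MulHom.comp_apply]⟩

end IsUniversal

theorem stmt0_general {S A B : Type*} [Semigroup S]
    (w : ℕ → FreeSemigroup A) (hw : IsUniversal S w)
    (e : B ↪ ℕ) (u : ℕ → FreeSemigroup B) :
    IsUniversal S u ↔
      IsUniversal S (fun m => (FreeSemigroup.lift (fun b => w (e b))) (u m)) :=
  ⟨hw.map_lift e.injective, IsUniversal.of_map _⟩

theorem stmt0 {S A B : Type*} [Semigroup S] [Countable B]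
    (w : ℕ → FreeSemigroup A) (hw : IsUniversal S w)
    (e : B ↪ ℕ) (u : ℕ → FreeSemigroup B) :
    IsUniversal S u ↔
      IsUniversal S (fun m => (FreeSemigroup.lift (fun b => w (e b))) (u m)) :=
  stmt0_general w hw e u
end

section
/- Any semigroup S that admits a universal sequence over a finite alphabet and has at least two elements has cardinality at least 2^ℵ₀. -/
universe u v

theorem stmt1_aux {S : Type u} {A : Type v} [Semigroup S] [Nontrivial S] [Finite A]
    (w : ℕ → FreeSemigroup A) (hw : IsUniversal S w) :
    Cardinal.continuum ≤ Cardinal.mk S := by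
  classical
  have hinj : Function.Injective (fun s : ℕ → S => (hw s).choose) := by
    intro s t hst
    funext n
    have hst' : (hw s).choose = (hw t).choose := hst
    have hs := (hw s).choose_spec n
    have ht := (hw t).choose_spec n
    rw [← hs, ← ht, hst']
  have hinj2 : Function.Injective
      (fun s : ℕ → S => FreeSemigroup.lift.symm ((hw s).choose)) :=
    (Equiv.injective _).comp hinj
  have hle := Cardinal.lift_mk_le'.mpr
    ⟨(⟨_, hinj2⟩ : (ℕ → S) ↪ (A → S))⟩
  have h2 : (2 : Cardinal) ≤ Cardinal.mk S := Cardinal.two_le_iff.mpr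
    (by obtain ⟨a, b, hab⟩ := exists_pair_ne S; exact ⟨a, b, hab⟩)
  have hcont : Cardinal.continuum ≤ Cardinal.mk (ℕ → S) := by
    rw [Cardinal.mk_arrow, Cardinal.mk_nat]
    simp only [Cardinal.lift_aleph0, Cardinal.lift_uzero]
    calc Cardinal.continuum = 2 ^ Cardinal.aleph0 := (Cardinal.two_power_aleph0).symm
    _ ≤ Cardinal.mk S ^ Cardinal.aleph0 := Cardinal.power_le_power_right h2
  -- S is infinite
  have hSinf : Cardinal.aleph0 ≤ Cardinal.mk S := by
    by_contra hfin
    push_neg at hfin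
    haveI : Finite S := Cardinal.lt_aleph0_iff_finite.mp hfin
    haveI : Finite (A → S) := Pi.finite
    have h1 : Cardinal.mk (A → S) < Cardinal.aleph0 := Cardinal.lt_aleph0_of_finite _
    have h3 := le_trans (Cardinal.lift_le.mpr hcont) hle
    have h4 : Cardinal.lift.{u} (Cardinal.mk (A → S))
        < Cardinal.lift.{max u v, u} Cardinal.continuum := by
      rw [Cardinal.lift_continuum]
      exact (Cardinal.lift_lt_aleph0.mpr h1).trans_le Cardinal.aleph0_le_continuum
    exact absurd h3 h4.not_ge
  -- A → S has cardinality ≤ lift (mk S)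
  have hA : Cardinal.mk (A → S) ≤ Cardinal.lift.{v} (Cardinal.mk S) := by
    rw [Cardinal.mk_arrow]
    haveI : Fintype A := Fintype.ofFinite A
    rw [Cardinal.mk_fintype A, Cardinal.lift_natCast]
    exact_mod_cast Cardinal.power_nat_le (by simpa using hSinf)
  have final := le_trans (le_trans (Cardinal.lift_le.mpr hcont) hle)
    (Cardinal.lift_le.mpr hA)
  simpa using final

/-- A semigroup with at least two elements admitting a universal sequence over a
finite alphabet has cardinality at least the continuum. -/
theorem stmt1 {S A : Type*} [Semigroup S] [Nontrivial S] [Finite A]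
    (w : ℕ → FreeSemigroup A) (hw : IsUniversal S w) :
    Cardinal.continuum ≤ Cardinal.mk S :=
  stmt1_aux w hw
end

section
/- Let X and Y be infinite sets with |X| < |Y|. Then every universal sequence for the symmetric group Sym(X) is also a universal sequence for Sym(Y). -/
open Cardinal Equiv

namespace IsUniversal

variable {A : Type*} {w : ℕ → FreeSemigroup A}

theorem pi {ι : Type*} {S : ι → Type*} [∀ i, Semigroup (S i)]
    (hw : ∀ i, IsUniversal (S i) w) : IsUniversal (∀ i, S i) w := by
  intro s
  choose φ hφ using fun i => hw i (fun n => s n i)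
  exact ⟨MulHom.pi φ, fun n => funext fun i => hφ i n⟩

theorem exists_hom_of_forall_mem_range {S T : Type*} [Semigroup S] [Semigroup T]
    (hw : IsUniversal S w) (f : S →ₙ* T) (s : ℕ → T) (hs : ∀ n, s n ∈ Set.range f) :
    ∃ φ : FreeSemigroup A →ₙ* T, ∀ n, φ (w n) = s n := by
  choose t ht using hs
  obtain ⟨φ, hφ⟩ := hw t
  exact ⟨f.comp φ, fun n => by simp [hφ, ht]⟩

end IsUniversal

section

universe u

namespace Cardinal

theorem mk_le_max_aleph0_of_countable_fibers {α β : Type u} (f : α → β)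
    (hf : ∀ b, (f ⁻¹' {b}).Countable) : #α ≤ max #β ℵ₀ :=
  calc #α ≤ #β * ℵ₀ :=
      mk_le_mk_mul_of_mk_preimage_le f fun b => le_aleph0_iff_set_countable.2 (hf b)
    _ ≤ max #β ℵ₀ := by simpa only [max_assoc, max_self] using mul_le_max #β ℵ₀

theorem mk_eq_of_surjective_of_countable_fibers {α β : Type u} {f : α → β}
    (hsurj : Function.Surjective f) (hf : ∀ b, (f ⁻¹' {b}).Countable) (hβ : ℵ₀ ≤ #β) :
    #α = #β :=
  le_antisymm ((mk_le_max_aleph0_of_countable_fibers f hf).trans_eq (max_eq_left hβ))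
    (mk_le_of_surjective hsurj)

theorem mk_fiber_fst_comp_eq {Y X : Type u} {J : Type*} {g : Y → J × X}
    (hsurj : Function.Surjective g) (hg : ∀ p, (g ⁻¹' {p}).Countable) (hX : ℵ₀ ≤ #X) (j : J) :
    #{y // (g y).1 = j} = #X := by
  let h : {y // (g y).1 = j} → X := fun y => (g y).2
  refine mk_eq_of_surjective_of_countable_fibers (f := h) (fun x => ?_) (fun x => ?_) hX
  · obtain ⟨y, hy⟩ := hsurj (j, x)
    exact ⟨⟨y, by rw [hy]⟩, by simp [h, hy]⟩
  · refine ((hg (j, x)).preimage Subtype.val_injective).mono fun y hy => ?_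
    exact Prod.ext y.2 hy

theorem exists_blocks_of_countable_fibers {Y Q X : Type u} {π : Y → Q}
    (hsurj : Function.Surjective π) (hπ : ∀ q, (π ⁻¹' {q}).Countable)
    (hX : ℵ₀ ≤ #X) (hXY : #X < #Y) :
    ∃ β : Q → Y, ∀ j, #{y // β (π y) = j} = #X := by
  have hY : ℵ₀ < #Y := hX.trans_lt hXY
  have hQ : #Q = #Y := by
    refine le_antisymm (mk_le_of_surjective hsurj) ?_
    have := mk_le_max_aleph0_of_countable_fibers π hπ
    exact (le_max_iff.1 this).resolve_right hY.not_ge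
  have hYX : #(Y × X) = #Y := by
    rw [mk_prod, lift_id, lift_id, mul_eq_max (hX.trans hXY.le) hX, max_eq_left hXY.le]
  obtain ⟨q⟩ : Nonempty (Q ≃ Y × X) := Cardinal.eq.1 (hQ.trans hYX.symm)
  refine ⟨fun c => (q c).1, mk_fiber_fst_comp_eq (g := q ∘ π) (q.surjective.comp hsurj)
    (fun p => ?_) hX⟩
  convert hπ (q.symm p) using 1
  ext y
  simp [Equiv.eq_symm_apply]

end Cardinal

theorem Equiv.Perm.exists_invariant_map_countable_fibers {Y : Type u} (s : ℕ → Perm Y) :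
    ∃ (Q : Type u) (π : Y → Q), Function.Surjective π ∧ (∀ q, (π ⁻¹' {q}).Countable) ∧
      ∀ n y, π (s n y) = π y := by
  let _ : MulAction (FreeGroup ℕ) Y := MulAction.compHom Y (FreeGroup.lift s)
  refine ⟨MulAction.orbitRel.Quotient (FreeGroup ℕ) Y, Quotient.mk _, Quotient.mk_surjective,
    fun q => ?_, fun n y => ?_⟩
  · obtain ⟨y, rfl⟩ := Quotient.mk_surjective q
    convert Set.countable_range fun g : FreeGroup ℕ => g • y using 1
    ext z
    exact Quotient.eq.trans (MulAction.orbitRel_apply.trans MulAction.mem_orbit_iff)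
  · exact Quotient.sound ⟨FreeGroup.of n, congrArg (· y) (FreeGroup.lift_apply_of (f := s))⟩

end

namespace Equiv.Perm

def blockHom {X Y J : Type*} (β : Y → J) (e : ∀ j, X ≃ {y // β y = j}) :
    (J → Perm X) →* Perm Y :=
  ((Equiv.sigmaFiberEquiv β).permCongrHom.toMonoidHom.comp (sigmaCongrRightHom _)).comp
    (MulEquiv.piCongrRight fun j => (e j).permCongrHom).toMonoidHom

theorem mem_range_blockHom {X Y J : Type*} {β : Y → J} (e : ∀ j, X ≃ {y // β y = j})
    {σ : Perm Y} (hσ : ∀ y, β (σ y) = β y) : σ ∈ Set.range (blockHom β e) := by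
  refine ⟨fun j => (e j).symm.permCongr (σ.subtypePerm fun y => by rw [hσ]), ?_⟩
  ext y
  simp [blockHom]

end Equiv.Perm

theorem stmt4_general {X Y : Type u} {A : Type*} [Infinite X]
    (hXY : Cardinal.mk X < Cardinal.mk Y)
    (w : ℕ → FreeSemigroup A) (hw : IsUniversal (Equiv.Perm X) w) :
    IsUniversal (Equiv.Perm Y) w := by
  intro s
  obtain ⟨Q, π, hsurj, hπ, hπs⟩ := Perm.exists_invariant_map_countable_fibers s
  obtain ⟨β, hβ⟩ := exists_blocks_of_countable_fibers hsurj hπ (aleph0_le_mk X) hXY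
  have e : ∀ j, X ≃ {y // β (π y) = j} := fun j => Classical.choice (Cardinal.eq.1 (hβ j).symm)
  exact (IsUniversal.pi fun _ => hw).exists_hom_of_forall_mem_range (Perm.blockHom _ e).toMulHom s
    fun n => Perm.mem_range_blockHom e fun y => by rw [hπs]

/-- If `X` and `Y` are infinite with `|X| < |Y|`, every universal sequence for
`Sym(X)` is universal for `Sym(Y)`. -/
theorem stmt4 {X Y : Type u} {A : Type*} [Infinite X] [Infinite Y] [Countable A]
    (hXY : Cardinal.mk X < Cardinal.mk Y)
    (w : ℕ → FreeSemigroup A) (hw : IsUniversal (Equiv.Perm X) w) :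
    IsUniversal (Equiv.Perm Y) w :=
  stmt4_general hXY w hw
end

section
/- Let X and Y be infinite sets with 2^ℵ₀ < |X| < |Y| and suppose |X| is a regular cardinal. Then every universal sequence for Sym(Y) is also a universal sequence for Sym(X). -/
/-!
Given `σ : ℕ → Sym(X)`, let the free group `F` on `ℕ` act on `X` through `σ`. Orbits are
countable, and an orbit is determined up to isomorphism by the conjugacy class of its
stabilizers; there are at most `2^ℵ₀` such classes. As `|X|` is regular and exceeds `2^ℵ₀`,
the points whose orbit type occurs fewer than `|X|` times form a set `R` with `|R| < |X|`.
Let `W` be `X` together with `|Y|` copies of `X \ R`, so `|W| = |Y|`, and use universality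
for `Sym(Y) ≅ Sym(W)` to get `φ` with `φ (w n)` acting on `W` as the `n`-th generator. The
closure `Z` of `R` and one copy of `X \ R` under the countable group generated by the image
of `φ` has size `|X|`, is `F`-invariant, and has as many orbits of each type as `X`. Hence
`Z ≅ X` as `F`-sets, and conjugating `φ` restricted to `Z` gives the homomorphism to `Sym(X)`.
-/

universe u v

open Cardinal MulAction Pointwise

theorem Cardinal.exists_equiv_of_mk_fiber_eq {α β : Type u} {γ : Type*} {f : α → γ} {g : β → γ}
    (h : ∀ c, #{a // f a = c} = #{b // g b = c}) : ∃ e : α ≃ β, ∀ a, g (e a) = f a := by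
  have e c := (Cardinal.eq.1 (h c)).some
  exact ⟨(Equiv.sigmaFiberEquiv f).symm.trans
    ((Equiv.sigmaCongrRight e).trans (Equiv.sigmaFiberEquiv g)), fun a => (e (f a) ⟨a, rfl⟩).2⟩

theorem Cardinal.mk_lt_of_isRegular_of_mk_fiber_lt {α : Type u} {β : Type v} {κ : Cardinal.{u}}
    (hκ : κ.IsRegular) (f : α → β) (hβ : lift.{u} #β < lift.{v} κ)
    (hf : ∀ b, #(f ⁻¹' {b}) < κ) : #α < κ := by
  have hα : lift.{v} #α ≤ lift.{u} #β * ⨆ b, lift.{v} #(f ⁻¹' {b}) := by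
    rw [← mk_univ, ← Set.preimage_univ (f := f), ← Set.iUnion_of_singleton, Set.preimage_iUnion]
    exact mk_iUnion_le_lift _
  refine lift_lt.{u, v}.1 <| hα.trans_lt <| mul_lt_of_lt hκ.lift.aleph0_le hβ <|
    lift_iSup_lt_of_lt_cof_ord ?_ fun b => lift_lt.2 (hf b)
  rwa [lift_lift, lift_umax.{v, u}, hκ.lift.cof_ord]

theorem Cardinal.mk_smul_le {α β : Type u} [SMul α β] (s : Set α) (t : Set β) :
    #(s • t : Set β) ≤ #s * #t := by
  rw [← Set.image2_smul]
  exact mk_image2_le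

theorem Subgroup.mk_le_continuum (F : Type v) [Group F] [Countable F] : #(Subgroup F) ≤ 𝔠 :=
  calc #(Subgroup F) ≤ #(Set F) := mk_le_of_injective SetLike.coe_injective
    _ = 2 ^ #F := mk_set
    _ ≤ 2 ^ ℵ₀ := power_le_power_left two_ne_zero mk_le_aleph0
    _ = 𝔠 := two_power_aleph0

theorem MulAction.mk_orbit_le_aleph0 (F : Type v) [Group F] [Countable F] {X : Type*}
    [MulAction F X] (x : X) : #(orbit F x) ≤ ℵ₀ :=
  have : Countable (orbit F x) := (Set.countable_range _).to_subtype
  mk_le_aleph0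

theorem Subgroup.apply_mem_smul_set_iff {W : Type*} {G : Subgroup (Equiv.Perm W)} {S : Set W}
    {g : Equiv.Perm W} (hg : g ∈ G) (z : W) :
    g z ∈ (G : Set (Equiv.Perm W)) • S ↔ z ∈ (G : Set (Equiv.Perm W)) • S := by
  have key {g : Equiv.Perm W} (hg : g ∈ G) {z : W} (hz : z ∈ (G : Set (Equiv.Perm W)) • S) :
      g z ∈ (G : Set (Equiv.Perm W)) • S := by
    obtain ⟨h, hh, s, hs, rfl⟩ := Set.mem_smul.1 hz
    exact Set.mem_smul.2 ⟨g * h, mul_mem hg hh, s, hs, rfl⟩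
  refine ⟨fun hz => ?_, key hg⟩
  simpa using key (inv_mem hg) hz

instance FreeGroup.instCountable {α : Type*} [Countable α] : Countable (FreeGroup α) :=
  inferInstanceAs (Countable (Quot _))

theorem FreeSemigroup.mulHom_apply_mem_range_lift {A G : Type*} [Group G]
    (φ : FreeSemigroup A →ₙ* G) (x : FreeSemigroup A) :
    φ x ∈ (FreeGroup.lift (φ ∘ FreeSemigroup.of)).range := by
  induction x using FreeSemigroup.recOnMul with
  | ih1 a => exact ⟨FreeGroup.of a, FreeGroup.lift_apply_of⟩
  | ih2 a x _ hx =>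
    rw [map_mul]
    exact mul_mem ⟨FreeGroup.of a, FreeGroup.lift_apply_of⟩ hx

def MulHom.subtypePerm {M W : Type*} [Semigroup M] (φ : M →ₙ* Equiv.Perm W) (Z : Set W)
    (hZ : ∀ m z, φ m z ∈ Z ↔ z ∈ Z) : M →ₙ* Equiv.Perm Z where
  toFun m := (φ m).subtypePerm (hZ m)
  map_mul' m n := by simp

theorem IsUniversal.of_surjective {S T : Type*} [Semigroup S] [Semigroup T] {A : Type*}
    {w : ℕ → FreeSemigroup A} (hw : IsUniversal S w) (f : S →ₙ* T)
    (hf : Function.Surjective f) : IsUniversal T w := by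
  intro t
  choose s hs using hf
  obtain ⟨φ, hφ⟩ := hw (s ∘ t)
  exact ⟨f.comp φ, fun n => by simp [hφ, hs]⟩

section OrbitType

variable (F : Type v) [Group F] {U V : Type u} [MulAction F U] [MulAction F V]

theorem stabilizer_smul_eq_toConjAct_smul (g : F) (x : U) :
    stabilizer F (g • x) = ConjAct.toConjAct g • stabilizer F x := by
  ext h
  rw [Subgroup.mem_pointwise_smul_iff_inv_smul_mem, ← map_inv, ConjAct.toConjAct_smul,
    mem_stabilizer_iff, mem_stabilizer_iff, inv_inv, mul_smul, mul_smul, inv_smul_eq_iff]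

/-- The orbit of `x` is `F ⧸ stabilizer F x`, so points with the same class have isomorphic
orbits. -/
def stabilizerClass (x : U) : orbitRel.Quotient (ConjAct F) (Subgroup F) :=
  Quotient.mk'' (stabilizer F x)

@[simp]
theorem stabilizerClass_smul (g : F) (x : U) :
    stabilizerClass F (g • x) = stabilizerClass F x := by
  rw [stabilizerClass, stabilizerClass, stabilizer_smul_eq_toConjAct_smul]
  exact Quotient.sound (mem_orbit _ _)

def orbitType : orbitRel.Quotient F U → orbitRel.Quotient (ConjAct F) (Subgroup F) :=
  Quotient.lift (stabilizerClass F) fun _ _ ⟨g, hg⟩ => hg ▸ stabilizerClass_smul F g _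

theorem orbitType_mk (x : U) : orbitType F (Quotient.mk'' x) = stabilizerClass F x := rfl

variable (U) in
def orbitTypeCount (c : orbitRel.Quotient (ConjAct F) (Subgroup F)) : Cardinal :=
  #{O : orbitRel.Quotient F U // orbitType F O = c}

theorem orbitTypeCount_le (c) : orbitTypeCount F U c ≤ #U :=
  (mk_subtype_le _).trans mk_quotient_le

variable (U) in
def rareSet : Set U := {x | orbitTypeCount F U (stabilizerClass F x) < #U}

theorem exists_smul_equiv_of_orbitTypeCount_eq
    (h : ∀ c, orbitTypeCount F U c = orbitTypeCount F V c) :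
    ∃ e : U ≃ V, ∀ (g : F) (x : U), e (g • x) = g • e x := by
  obtain ⟨Φ, hΦ⟩ := Cardinal.exists_equiv_of_mk_fiber_eq h
  have hrep (O : orbitRel.Quotient F U) :
      ∃ y : V, Quotient.mk'' y = Φ O ∧ stabilizer F y = stabilizer F O.out := by
    have hclass : stabilizerClass F O.out = stabilizerClass F (Φ O).out := by
      rw [← orbitType_mk, ← orbitType_mk, Quotient.out_eq', Quotient.out_eq', hΦ]
    obtain ⟨g, hg⟩ := Quotient.exact hclass
    refine ⟨ConjAct.ofConjAct g • (Φ O).out, ?_, ?_⟩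
    · exact (Quotient.sound (mem_orbit _ _)).trans (Quotient.out_eq' _)
    · rw [stabilizer_smul_eq_toConjAct_smul, ConjAct.toConjAct_ofConjAct]
      exact hg
  choose y hyO hystab using hrep
  -- With equal (not merely conjugate) stabilizers the two class formulas match orbit by orbit.
  let eU := selfEquivSigmaOrbitsQuotientStabilizer F U
  let eV := selfEquivSigmaOrbitsQuotientStabilizer' F V (φ := fun O' => y (Φ.symm O'))
    fun O' => by simp only [hyO, Equiv.apply_symm_apply]
  let e := eU.trans <| (Equiv.sigmaCongr Φ fun O => Subgroup.quotientEquivOfEq <| by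
    simp only [Equiv.symm_apply_apply, hystab]).trans eV.symm
  have he (O : orbitRel.Quotient F U) (g : F) : e (g • O.out) = g • y O := by
    have : eU (g • O.out) = ⟨O, (g : F ⧸ stabilizer F O.out)⟩ := (eU.eq_symm_apply).1 rfl
    simp only [e, Equiv.trans_apply, this]
    show g • y (Φ.symm (Φ O)) = _
    rw [Φ.symm_apply_apply]
  refine ⟨e, fun g x => ?_⟩
  obtain ⟨k, hx⟩ := Quotient.mk_out' (s₁ := orbitRel F U) x
  rw [eq_inv_smul_iff.2 hx, smul_smul, he, he, mul_smul]

theorem orbitTypeCount_eq_of_surjective (p : U →[F] V)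
    (hstab : ∀ x, stabilizer F (p x) = stabilizer F x) (hsurj : Function.Surjective p)
    (hinj : ∀ x x', p x = p x' → p x ∈ rareSet F V → x = x') (hcard : #U ≤ #V) (c) :
    orbitTypeCount F U c = orbitTypeCount F V c := by
  have hclass (x : U) : stabilizerClass F (p x) = stabilizerClass F x := by
    rw [stabilizerClass, hstab]; rfl
  let π : orbitRel.Quotient F U → orbitRel.Quotient F V :=
    Quotient.map' p fun _ _ ⟨g, hg⟩ => ⟨g, by rw [← hg, map_smul]⟩
  have hπ (O) : orbitType F (π O) = orbitType F O := by
    induction O using Quotient.inductionOn' with | h x => exact hclass x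
  let πc (O : {O // orbitType F O = c}) : {O' // orbitType F O' = c} :=
    ⟨π O.1, (hπ O.1).trans O.2⟩
  have hπc_surj : Function.Surjective πc := by
    rintro ⟨O', hO'⟩
    induction O' using Quotient.inductionOn' with | h y => ?_
    obtain ⟨x, rfl⟩ := hsurj y
    exact ⟨⟨Quotient.mk'' x, (hclass x).symm.trans hO'⟩, rfl⟩
  by_cases hc : orbitTypeCount F V c < #V
  · have hπc_inj : Function.Injective πc := by
      rintro ⟨O₁, h₁⟩ ⟨O₂, h₂⟩ h
      induction O₁ using Quotient.inductionOn' with | h x₁ => ?_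
      induction O₂ using Quotient.inductionOn' with | h x₂ => ?_
      obtain ⟨g, hg⟩ := Quotient.exact (congrArg Subtype.val h)
      have hrare : p (g • x₂) ∈ rareSet F V := by
        rwa [rareSet, Set.mem_ofPred_eq, hclass, stabilizerClass_smul, ← orbitType_mk, h₂]
      have := hinj _ _ ((map_smul p g x₂).trans hg) hrare
      exact Subtype.ext (Quotient.sound ⟨g, this⟩)
    exact mk_congr (Equiv.ofBijective πc ⟨hπc_inj, hπc_surj⟩)
  · have hV : orbitTypeCount F V c = #V := (orbitTypeCount_le F c).antisymm (not_lt.1 hc)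
    exact le_antisymm (hV ▸ (orbitTypeCount_le F c).trans hcard) (mk_le_of_surjective hπc_surj)

variable [Countable F]

theorem mk_stabilizerClass_fiber_le (c) :
    #{x : U // stabilizerClass F x = c} ≤ orbitTypeCount F U c * ℵ₀ := by
  refine mk_le_mk_mul_of_mk_preimage_le
    (fun x => (⟨Quotient.mk'' x.1, x.2⟩ : {O // orbitType F O = c})) fun O => ?_
  refine le_trans (mk_le_of_injective (f := fun x => (⟨x.1.1, ?_⟩ : O.1.orbit)) ?_) ?_
  · exact orbitRel.Quotient.mem_orbit.2 (congrArg Subtype.val x.2)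
  · intro x y h
    exact Subtype.ext (Subtype.ext (Subtype.mk.inj h))
  · rw [orbitRel.Quotient.orbit_eq_orbit_out _ Quotient.out_eq']
    exact mk_orbit_le_aleph0 F _

theorem mk_rareSet_lt (hcont : 𝔠 < #U) (hreg : (#U).IsRegular) : #(rareSet F U) < #U := by
  have hℵ : ℵ₀ < #U := aleph0_lt_continuum.trans hcont
  refine mk_lt_of_isRegular_of_mk_fiber_lt hreg
    (fun x => (⟨stabilizerClass F x.1, x.2⟩ : {c // orbitTypeCount F U c < #U})) ?_ fun c => ?_
  · calc lift.{u} #{c // orbitTypeCount F U c < #U}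
        ≤ lift.{u} #(Subgroup F) :=
          lift_le.2 <| (mk_subtype_le _).trans (mk_le_of_surjective Quotient.mk''_surjective)
      _ ≤ 𝔠 := lift_le_continuum.2 (Subgroup.mk_le_continuum F)
      _ < lift.{v} #U := continuum_lt_lift.2 hcont
  · refine lt_of_le_of_lt ?_ (mul_lt_of_lt hℵ.le c.2 hℵ)
    refine le_trans ?_ (mk_stabilizerClass_fiber_le F c.1)
    refine mk_le_of_injective (f := fun x => ⟨x.1.1, congrArg Subtype.val x.2⟩) fun x y h => ?_
    exact Subtype.ext (Subtype.ext (Subtype.mk.inj h))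

end OrbitType

section

variable (F : Type v) [Group F] (X : Type u) [MulAction F X] (Y : Type u)

def frequentPart : SubMulAction F X where
  carrier := (rareSet F X)ᶜ
  smul_mem' g x hx := by simpa [rareSet] using hx

/-- `X` enlarged by `|Y|` copies of the points whose orbit type occurs `|X|` times: any invariant
subset of size at most `|X|` containing `seed` has the same orbit-type counts as `X`. -/
abbrev Inflation := X ⊕ Σ _ : Y, frequentPart F X

namespace Inflation

variable {F X Y}

def proj : Inflation F X Y →[F] X where
  toFun := Sum.elim id fun q => q.2
  map_smul' := by rintro g (x | ⟨y, x⟩) <;> rfl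

@[simp]
theorem proj_inl (x : X) : proj (Sum.inl x : Inflation F X Y) = x := rfl

@[simp]
theorem proj_inr (y : Y) (x : frequentPart F X) : proj (Sum.inr ⟨y, x⟩ : Inflation F X Y) = x :=
  rfl

theorem stabilizer_proj (z : Inflation F X Y) : stabilizer F (proj z) = stabilizer F z := by
  ext g
  rcases z with x | ⟨y, x⟩ <;> simp [mem_stabilizer_iff, Subtype.ext_iff]

theorem eq_inl_of_proj_mem_rareSet {z : Inflation F X Y} (hz : proj z ∈ rareSet F X) :
    z = Sum.inl (proj z) := by
  rcases z with x | ⟨y, x⟩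
  · rfl
  · exact absurd hz x.2

theorem mk_eq [Countable F] (hcont : 𝔠 < #X) (hreg : (#X).IsRegular) (hXY : #X ≤ #Y) :
    #(Inflation F X Y) = #Y := by
  have hℵ : ℵ₀ ≤ #X := (aleph0_lt_continuum.trans hcont).le
  have : Infinite X := infinite_iff.2 hℵ
  have hfreq : #(frequentPart F X) = #X := mk_compl_of_infinite _ (mk_rareSet_lt F hcont hreg)
  simp only [mk_sum, mk_sigma, sum_const, lift_id, hfreq]
  rw [mul_eq_left (hℵ.trans hXY) hXY (mk_ne_zero X), add_eq_right (hℵ.trans hXY) hXY]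

def seed (y₀ : Y) : Set (Inflation F X Y) :=
  Sum.inl '' rareSet F X ∪ Set.range fun x => Sum.inr ⟨y₀, x⟩

theorem mk_seed_le (hℵ : ℵ₀ ≤ #X) (y₀ : Y) : #(seed y₀ : Set (Inflation F X Y)) ≤ #X :=
  calc _ ≤ #(Sum.inl '' rareSet F X : Set (Inflation F X Y)) +
        #(Set.range fun x : frequentPart F X => (Sum.inr ⟨y₀, x⟩ : Inflation F X Y)) :=
        mk_union_le _ _
    _ ≤ #X + #X :=
        add_le_add (mk_image_le.trans (mk_set_le _)) (mk_range_le.trans (mk_subtype_le _))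
    _ = #X := add_eq_self hℵ

theorem exists_proj_eq_of_seed_subset {y₀ : Y} {Z : Set (Inflation F X Y)} (hZ : seed y₀ ⊆ Z)
    (x : X) : ∃ z ∈ Z, proj z = x := by
  by_cases hx : x ∈ rareSet F X
  · exact ⟨Sum.inl x, hZ (Or.inl ⟨x, hx, rfl⟩), rfl⟩
  · exact ⟨Sum.inr ⟨y₀, ⟨x, hx⟩⟩, hZ (Or.inr ⟨⟨x, hx⟩, rfl⟩), rfl⟩

theorem exists_smul_equiv (Z : SubMulAction F (Inflation F X Y)) {y₀ : Y}
    (hZ : seed y₀ ⊆ (Z : Set (Inflation F X Y))) (hZX : #Z ≤ #X) :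
    ∃ e : Z ≃ X, ∀ (g : F) (z : Z), e (g • z) = g • e z := by
  refine exists_smul_equiv_of_orbitTypeCount_eq F
    (orbitTypeCount_eq_of_surjective F (proj.comp Z.subtype) (fun z => ?_) ?_ ?_ hZX)
  · exact (stabilizer_proj z.1).trans (SubMulAction.stabilizer_of_subMul z).symm
  · intro x
    obtain ⟨z, hz, rfl⟩ := exists_proj_eq_of_seed_subset hZ x
    exact ⟨⟨z, hz⟩, rfl⟩
  · intro z z' h hrare
    have hz := eq_inl_of_proj_mem_rareSet (z := z.1) hrare
    have hz' := eq_inl_of_proj_mem_rareSet (z := z'.1) (h ▸ hrare)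
    exact Subtype.ext (hz.trans (h ▸ hz'.symm))

end Inflation

end

theorem exists_subMulAction_invariant_of_mulHom {A W : Type*} [Countable A]
    [MulAction (FreeGroup ℕ) W] {w : ℕ → FreeSemigroup A} (φ : FreeSemigroup A →ₙ* Equiv.Perm W)
    (hφ : ∀ n, φ (w n) = toPerm (FreeGroup.of n)) (S : Set W) :
    ∃ Z : SubMulAction (FreeGroup ℕ) W, S ⊆ Z ∧ #Z ≤ ℵ₀ * #S ∧ ∀ x z, φ x z ∈ Z ↔ z ∈ Z := by
  let G := (FreeGroup.lift (φ ∘ FreeSemigroup.of)).range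
  have hφG := FreeSemigroup.mulHom_apply_mem_range_lift φ
  have hFG (g : FreeGroup ℕ) : toPerm g ∈ G := by
    suffices ⊤ ≤ G.comap (toPermHom (FreeGroup ℕ) W) from this trivial
    rw [← FreeGroup.closure_range_of, Subgroup.closure_le]
    rintro _ ⟨n, rfl⟩
    exact Subgroup.mem_comap.2 (hφ n ▸ hφG (w n) : toPerm (FreeGroup.of n) ∈ G)
  have hG : #G ≤ ℵ₀ := by
    rw [← SetLike.coe_sort_coe, MonoidHom.coe_range, mk_le_aleph0_iff]
    exact (Set.countable_range _).to_subtype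
  refine ⟨{ carrier := (G : Set (Equiv.Perm W)) • S
            smul_mem' g z hz := (Subgroup.apply_mem_smul_set_iff (hFG g) z).2 hz },
    fun s hs => Set.mem_smul.2 ⟨1, one_mem G, s, hs, one_smul _ s⟩,
    (mk_smul_le _ _).trans (mul_le_mul_left hG _),
    fun x => Subgroup.apply_mem_smul_set_iff (hφG x)⟩

theorem stmt6_general {X Y : Type u} {A : Type*} [Infinite Y] [Countable A]
    (hcont : Cardinal.continuum < Cardinal.mk X)
    (hXY : Cardinal.mk X < Cardinal.mk Y)
    (hreg : (Cardinal.mk X).IsRegular)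
    (w : ℕ → FreeSemigroup A) (hw : IsUniversal (Equiv.Perm Y) w) :
    IsUniversal (Equiv.Perm X) w := by
  intro σ
  let : MulAction (FreeGroup ℕ) X := MulAction.compHom X (FreeGroup.lift σ)
  have hℵ : ℵ₀ ≤ #X := (aleph0_lt_continuum.trans hcont).le
  obtain ⟨y₀⟩ := (inferInstance : Nonempty Y)
  obtain ⟨eW⟩ := Cardinal.eq.1 (Inflation.mk_eq (F := FreeGroup ℕ) hcont hreg hXY.le)
  obtain ⟨φ, hφ⟩ := hw.of_surjective eW.symm.permCongrHom.toMulHom eW.symm.permCongrHom.surjective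
    fun n => toPerm (FreeGroup.of n)
  obtain ⟨Z, hseed, hZX, hZ⟩ := exists_subMulAction_invariant_of_mulHom φ hφ (Inflation.seed y₀)
  obtain ⟨e, he⟩ := Inflation.exists_smul_equiv Z hseed <|
    hZX.trans <| (mul_le_mul_right (Inflation.mk_seed_le hℵ y₀) _).trans_eq (aleph0_mul_eq hℵ)
  refine ⟨e.permCongrHom.toMulHom.comp (φ.subtypePerm Z hZ), fun n => Equiv.ext fun x => ?_⟩
  have hres : φ.subtypePerm Z hZ (w n) (e.symm x) = FreeGroup.of n • e.symm x :=
    Subtype.ext (congrArg (· (e.symm x : Inflation (FreeGroup ℕ) X Y)) (hφ n))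
  show e (φ.subtypePerm Z hZ (w n) (e.symm x)) = σ n x
  rw [hres, he, Equiv.apply_symm_apply]
  rfl

/-- If `2^ℵ₀ < |X| < |Y|` with `|X|` regular, every universal sequence for
`Sym(Y)` is universal for `Sym(X)`. -/
theorem stmt6 {X Y : Type u} {A : Type*} [Infinite X] [Infinite Y] [Countable A]
    (hcont : Cardinal.continuum < Cardinal.mk X)
    (hXY : Cardinal.mk X < Cardinal.mk Y)
    (hreg : (Cardinal.mk X).IsRegular)
    (w : ℕ → FreeSemigroup A) (hw : IsUniversal (Equiv.Perm Y) w) :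
    IsUniversal (Equiv.Perm X) w :=
  stmt6_general hcont hXY hreg w hw
end

section
/- Let X and Y be infinite sets with 2^ℵ₀ < |X| ≤ |Y|. Then the set of universal sequences for Sym(X) equals the set of universal sequences for Sym(Y). (The regularity assumption on |X| can be removed by passing through the successor cardinal of 2^ℵ₀, which is regular.) -/
open Cardinal

universe u

theorem exists_superset_forall_apply_mem_iff {ι Z : Type*} [Countable ι]
    (f : ι → Equiv.Perm Z) {S₀ : Set Z} {κ : Cardinal} (hκ : ℵ₀ ≤ κ) (hS₀ : #S₀ ≤ κ) :
    ∃ P : Set Z, S₀ ⊆ P ∧ #P ≤ κ ∧ ∀ i z, f i z ∈ P ↔ z ∈ P := by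
  let ρ := FreeGroup.lift f
  refine ⟨⋃ g, ρ g ⁻¹' S₀, fun z hz => Set.mem_iUnion.2 ⟨1, hz⟩, ?_, fun i z => ?_⟩
  · rw [← lift_le]
    refine (mk_iUnion_le_lift _).trans (mul_le_of_le (aleph0_le_lift.2 hκ) ?_ ?_)
    · exact (lift_le_aleph0.2 mk_le_aleph0).trans (aleph0_le_lift.2 hκ)
    · exact ciSup_le' fun g => by rw [mk_preimage_equiv]; exact lift_le.2 hS₀
  · simp only [Set.mem_iUnion, Set.mem_preimage]
    constructor
    · rintro ⟨g, hg⟩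
      exact ⟨g * FreeGroup.of i, by simpa [ρ] using hg⟩
    · rintro ⟨g, hg⟩
      exact ⟨g * (FreeGroup.of i)⁻¹, by simpa [ρ] using hg⟩

theorem mk_sigma_le_continuum {ι : Type*} {F : ι → Type*} (hι : #ι ≤ 𝔠)
    (hF : ∀ i, #(F i) ≤ 𝔠) : #(Σ i, F i) ≤ 𝔠 := by
  rw [mk_sigma]
  exact (sum_le_lift_mk_mul_iSup_lift _).trans (mul_le_of_le aleph0_le_continuum
    (lift_le_continuum.2 hι) (ciSup_le' fun i => lift_le_continuum.2 (hF i)))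

theorem mk_le_continuum_of_fibers {α : Type u} {β : Type*} (f : α → β) (hβ : #β ≤ 𝔠)
    (hf : ∀ b, #{a // f a = b} ≤ 𝔠) : #α ≤ 𝔠 := by
  rw [← lift_le_continuum]
  exact (lift_mk_le_lift_mk_mul_of_lift_mk_preimage_le f fun b =>
    lift_le_continuum.2 (hf b)).trans
      (mul_le_of_le aleph0_le_continuum (lift_le_continuum.2 hβ) le_rfl)

theorem mk_subgroup_le_continuum {G : Type*} [Group G] [Countable G] : #(Subgroup G) ≤ 𝔠 :=
  (mk_le_of_injective SetLike.coe_injective).trans <| by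
    rw [mk_set]
    exact (power_le_power_left two_ne_zero mk_le_aleph0).trans_eq two_power_aleph0

theorem mk_quotient_le_continuum {G : Type*} [Group G] [Countable G] (H : Subgroup G) :
    #(G ⧸ H) ≤ 𝔠 :=
  (mk_le_of_surjective QuotientGroup.mk_surjective).trans (mk_le_aleph0.trans aleph0_le_continuum)

theorem exists_sigma_sum_equiv {Ω L : Type u} {K : Type*} (h : Ω → K) (hK : #K ≤ 𝔠)
    (hΩ : 𝔠 < #Ω) (hL : #L = 𝔠) :
    ∃ (J : Type u) (I : J → Type u) (H : J → K) (e : (Σ j, I j ⊕ L) ≃ Ω),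
      (∀ j, #(I j) ≤ 𝔠) ∧ ∀ j l, h (e ⟨j, .inr l⟩) = H j := by
  classical
  let big (k : K) : Prop := 𝔠 < #{ω // h ω = k}
  let J := {ω // big (h ω)}
  let Small := {ω // ¬ big (h ω)}
  have hSmall : #Small ≤ 𝔠 := by
    refine mk_le_continuum_of_fibers (fun s : Small => h s) hK fun k => ?_
    by_cases hk : big k
    · have : IsEmpty {s : Small // h s = k} := ⟨fun s => s.1.2 (by rwa [s.2])⟩
      simp
    · refine (mk_le_of_injective (f := fun s : {s : Small // h s = k} =>
        (⟨s.1.1, s.2⟩ : {ω // h ω = k})) fun s s' hs => ?_).trans (not_lt.1 hk)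
      exact Subtype.ext <| Subtype.ext <| by simpa using congrArg Subtype.val hs
  obtain ⟨j₀⟩ : Nonempty J := by
    by_contra hJ
    refine hΩ.not_ge (mk_le_continuum_of_fibers h hK fun k => not_lt.1 fun hk => hJ ?_)
    obtain ⟨ω, hω⟩ := mk_ne_zero_iff.1 (ne_bot_of_gt hk)
    exact ⟨⟨ω, hω ▸ hk⟩⟩
  -- Each big fibre absorbs a factor `L`; the small fibres all go into the block of `j₀`.
  have hfib (k : K) : Nonempty ({p : J × L // h p.1 = k} ≃ {j : J // h j = k}) := by
    refine Cardinal.eq.1 ?_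
    rw [mk_congr (Equiv.prodSubtypeFstEquivSubtypeProd (p := fun j : J => h j = k)), mk_prod,
      lift_id, lift_id, hL]
    by_cases hk : big k
    · have hk' : 𝔠 < #{j : J // h j = k} := by
        rwa [mk_congr (Equiv.subtypeSubtypeEquivSubtype (q := fun ω => h ω = k)
          fun hω => by rwa [hω])]
      exact mul_eq_left (aleph0_le_continuum.trans hk'.le) hk'.le continuum_ne_zero
    · have : IsEmpty {j : J // h j = k} := ⟨fun j => hk (j.2 ▸ j.1.2)⟩
      simp
  let eJ : J × L ≃ J := Equiv.ofFiberEquiv fun k => (hfib k).some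
  refine ⟨J, fun j => {_s : Small // j₀ = j}, fun j => h j,
    (Equiv.sigmaSumDistrib _ fun _ => L).trans <|
      ((Equiv.sigmaFiberEquiv fun _ : Small => j₀).sumCongr
        ((Equiv.sigmaEquivProd J L).trans eJ)).trans <|
        (Equiv.sumComm _ _).trans (Equiv.sumCompl fun ω => big (h ω)),
    fun j => (mk_subtype_le _).trans hSmall, fun j l => ?_⟩
  exact Equiv.ofFiberEquiv_map (fun k => (hfib k).some) (j, l)

section

variable {A : Type*} {w : ℕ → FreeSemigroup A}

variable (w) in
def Realizes (Z : Type*) [MulAction (FreeGroup ℕ) Z] : Prop :=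
  ∃ φ : FreeSemigroup A →ₙ* Equiv.Perm Z, ∀ n, φ (w n) = MulAction.toPerm (FreeGroup.of n)

theorem IsUniversal.of_mulEquiv {S S' : Type*} [Semigroup S] [Semigroup S'] (e : S ≃* S')
    (h : IsUniversal S w) : IsUniversal S' w := by
  intro s
  obtain ⟨φ, hφ⟩ := h (e.symm ∘ s)
  exact ⟨e.toMulHom.comp φ, fun n => by simp [hφ]⟩

theorem IsUniversal.realizes {Z : Type*} [MulAction (FreeGroup ℕ) Z]
    (h : IsUniversal (Equiv.Perm Z) w) : Realizes w Z :=
  h _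

theorem apply_mem_iff_of_forall_of {Z : Type*} (φ : FreeSemigroup A →ₙ* Equiv.Perm Z)
    {P : Set Z} (hP : ∀ a z, φ (FreeSemigroup.of a) z ∈ P ↔ z ∈ P) (v : FreeSemigroup A)
    (z : Z) : φ v z ∈ P ↔ z ∈ P := by
  induction v using FreeSemigroup.recOnMul generalizing z with
  | ih1 a => exact hP a z
  | ih2 a v _ ih => rw [map_mul, Equiv.Perm.mul_apply, hP, ih]

theorem Realizes.of_injective {Z Z' : Type*} [MulAction (FreeGroup ℕ) Z]
    [MulAction (FreeGroup ℕ) Z'] {φ : FreeSemigroup A →ₙ* Equiv.Perm Z}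
    (hφ : ∀ n, φ (w n) = MulAction.toPerm (FreeGroup.of n)) {ψ : Z' → Z}
    (hψ : Function.Injective ψ)
    (hψ_smul : ∀ (n : ℕ) z, ψ (FreeGroup.of n • z) = FreeGroup.of n • ψ z)
    (hrange : ∀ a z, φ (FreeSemigroup.of a) z ∈ Set.range ψ ↔ z ∈ Set.range ψ) :
    Realizes w Z' := by
  let e := Equiv.ofInjective ψ hψ
  let φ' : FreeSemigroup A →ₙ* Equiv.Perm Z' := FreeSemigroup.lift fun a =>
    e.symm.permCongr ((φ (FreeSemigroup.of a)).subtypePerm (hrange a))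
  have hφ' (v : FreeSemigroup A) (z : Z') : ψ (φ' v z) = φ v (ψ z) := by
    induction v using FreeSemigroup.recOnMul generalizing z with
    | ih1 a => simp [φ', e, Equiv.permCongr_apply, Equiv.apply_ofInjective_symm]
    | ih2 a v iha ihv =>
      rw [map_mul, Equiv.Perm.mul_apply, iha, ihv, map_mul, Equiv.Perm.mul_apply]
  refine ⟨φ', fun n => Equiv.ext fun z => hψ ?_⟩
  rw [hφ', hφ, MulAction.toPerm_apply, MulAction.toPerm_apply, hψ_smul]

theorem Realizes.of_equiv {Z Z' : Type*} [MulAction (FreeGroup ℕ) Z]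
    [MulAction (FreeGroup ℕ) Z'] (h : Realizes w Z) (e : Z ≃ Z')
    (he : ∀ (g : FreeGroup ℕ) z, e (g • z) = g • e z) : Realizes w Z' :=
  have ⟨_, hφ⟩ := h
  .of_injective hφ e.symm.injective (fun n z => e.injective (by simp [he])) (by simp)

theorem Realizes.sigma {J : Type*} {Z : J → Type*} [∀ j, MulAction (FreeGroup ℕ) (Z j)]
    (h : ∀ j, Realizes w (Z j)) : Realizes w (Σ j, Z j) := by
  choose φ hφ using h
  refine ⟨{ toFun := fun v => Equiv.sigmaCongrRight fun j => φ j v, map_mul' := ?_ },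
    fun n => ?_⟩
  · intro v v'
    ext ⟨j, z⟩ : 1
    simp [map_mul]
  · ext ⟨j, z⟩ : 1
    simp [hφ, Sigma.smul_mk]

variable (w) in
/-- `Σ _ : L, T` stands for `L × T` with `FreeGroup ℕ` acting on `T` only. -/
def RealizesContinuumBlocks : Prop :=
  ∀ (S T L : Type u) [MulAction (FreeGroup ℕ) S] [MulAction (FreeGroup ℕ) T],
    #S ≤ 𝔠 → #T ≤ 𝔠 → Nonempty T → #L = 𝔠 → Realizes w (S ⊕ Σ _ : L, T)

theorem IsUniversal.realizesContinuumBlocks [Countable A] {X : Type u} (hX : 𝔠 ≤ #X)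
    (hU : IsUniversal (Equiv.Perm X) w) : RealizesContinuumBlocks.{u} w := by
  intro S T L _ _ hS hT hTne hL
  have hX₀ : ℵ₀ ≤ #X := aleph0_le_continuum.trans hX
  have hZ : #(S ⊕ Σ _ : X, T) = #X := by
    rw [mk_sum, mk_congr (Equiv.sigmaEquivProd X T), mk_prod, lift_id, lift_id, lift_id,
      lift_id, mul_eq_left hX₀ (hT.trans hX) (mk_ne_zero_iff.2 hTne),
      add_eq_right hX₀ (hS.trans hX)]
  obtain ⟨φ, hφ⟩ := (hU.of_mulEquiv (Cardinal.eq.1 hZ).some.symm.permCongrHom).realizes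
  obtain ⟨W, hW⟩ := Cardinal.le_mk_iff_exists_set.1 hX
  let S₀ : Set (S ⊕ Σ _ : X, T) :=
    Set.range Sum.inl ∪ Set.range fun p : W × T => Sum.inr ⟨p.1, p.2⟩
  have hS₀ : #S₀ ≤ 𝔠 := by
    refine (mk_union_le _ _).trans (add_le_of_le aleph0_le_continuum (mk_range_le.trans hS)
      (mk_range_le.trans ?_))
    rw [mk_prod, lift_id, lift_id, hW]
    exact mul_le_of_le aleph0_le_continuum le_rfl hT
  obtain ⟨P, hS₀P, hP, hPinv⟩ := exists_superset_forall_apply_mem_iff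
    (fun a => φ (FreeSemigroup.of a)) aleph0_le_continuum hS₀
  let F (t : T) : Set X := {x | Sum.inr ⟨x, t⟩ ∈ P}
  have hF_smul (n : ℕ) (t : T) : F (FreeGroup.of n • t) = F t := by
    ext x
    have := apply_mem_iff_of_forall_of φ hPinv (w n) (Sum.inr ⟨x, t⟩)
    rwa [hφ] at this
  have hF (t : T) : #(F t) = #L := by
    refine le_antisymm ?_ ?_
    · have : Function.Injective fun x : F t => (⟨Sum.inr ⟨x, t⟩, x.2⟩ : P) := by
        intro x y h
        simpa [Subtype.ext_iff] using h
      exact (mk_le_of_injective this).trans (hP.trans hL.ge)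
    · rw [hL, ← hW]
      exact mk_le_mk_of_subset fun x hx => hS₀P (Or.inr ⟨(⟨x, hx⟩, t), rfl⟩)
  -- Choosing the bijection `F t ≃ L` as a function of the set `F t` makes it constant on orbits.
  let E (s : {s : Set X // #s = #L}) : s.1 ≃ L := (Cardinal.eq.1 s.2).some
  have hE (s s' : {s : Set X // #s = #L}) (h : s = s') (l : L) :
      ((E s).symm l : X) = (E s').symm l := by
    subst h; rfl
  let e (t : T) : F t ≃ L := E ⟨F t, hF t⟩
  let ψ : S ⊕ (Σ _ : L, T) → S ⊕ Σ _ : X, T :=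
    Sum.map id fun p => ⟨(e p.2).symm p.1, p.2⟩
  have hψ_range : Set.range ψ = P := by
    ext z
    constructor
    · rintro ⟨s | ⟨l, t⟩, rfl⟩
      · exact hS₀P (Or.inl ⟨s, rfl⟩)
      · exact ((e t).symm l).2
    · rcases z with s | ⟨x, t⟩
      · exact fun _ => ⟨Sum.inl s, rfl⟩
      · exact fun hx => ⟨Sum.inr ⟨e t ⟨x, hx⟩, t⟩, by simp [ψ]⟩
  refine Realizes.of_injective hφ (ψ := ψ) ?_ ?_ (by simpa [hψ_range] using hPinv)
  · refine Sum.map_injective.2 ⟨Function.injective_id, ?_⟩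
    rintro ⟨l, t⟩ ⟨l', t'⟩ h
    simp only [Sigma.mk.inj_iff, heq_eq_eq] at h
    obtain ⟨h, rfl⟩ := h
    simpa using Subtype.ext h
  · rintro n (s | ⟨l, t⟩)
    · rfl
    · simp only [ψ, Sum.smul_inr, Sigma.smul_mk, Sum.map_inr]
      rw [hE _ ⟨F t, hF t⟩ (Subtype.ext (hF_smul n t))]

theorem RealizesContinuumBlocks.realizes_sigma_quotient (hC : RealizesContinuumBlocks.{u} w)
    {I L : Type u} (hI : #I ≤ 𝔠) (hL : #L = 𝔠) (f : I ⊕ L → Subgroup (FreeGroup ℕ))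
    {H : Subgroup (FreeGroup ℕ)} (hf : ∀ l, f (.inr l) = H) :
    Realizes w (Σ x, FreeGroup ℕ ⧸ f x) := by
  have hS : #(Σ i, FreeGroup ℕ ⧸ f (.inl i)) ≤ 𝔠 :=
    mk_sigma_le_continuum hI fun _ => mk_quotient_le_continuum _
  have hT : #(ULift.{u} (FreeGroup ℕ ⧸ H)) ≤ 𝔠 := by
    rw [mk_uLift]
    exact lift_le_continuum.2 (mk_quotient_le_continuum H)
  let e : (Σ i, FreeGroup ℕ ⧸ f (.inl i)) ⊕ (Σ _ : L, ULift.{u} (FreeGroup ℕ ⧸ H)) ≃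
      Σ x, FreeGroup ℕ ⧸ f x :=
    ((Equiv.refl _).sumCongr (Equiv.sigmaCongrRight fun l =>
      Equiv.ulift.trans (Subgroup.quotientEquivOfEq (hf l).symm))).trans
      (Equiv.sumSigmaDistrib fun x => FreeGroup ℕ ⧸ f x).symm
  refine (hC _ _ L hS hT inferInstance hL).of_equiv e ?_
  rintro g (⟨i, c⟩ | ⟨l, ⟨c⟩⟩)
  · rfl
  · induction c using QuotientGroup.induction_on
    rfl

theorem RealizesContinuumBlocks.realizes (hC : RealizesContinuumBlocks.{u} w) {X : Type u}
    [MulAction (FreeGroup ℕ) X] (hX : 𝔠 < #X) : Realizes w X := by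
  let h (ω : MulAction.orbitRel.Quotient (FreeGroup ℕ) X) :=
    MulAction.stabilizer (FreeGroup ℕ) ω.out
  let eX := MulAction.selfEquivSigmaOrbitsQuotientStabilizer (FreeGroup ℕ) X
  have hΩ : 𝔠 < #(MulAction.orbitRel.Quotient (FreeGroup ℕ) X) := by
    refine lt_of_not_ge fun hΩ => hX.not_ge ?_
    rw [mk_congr eX]
    exact mk_sigma_le_continuum hΩ fun _ => mk_quotient_le_continuum _
  obtain ⟨J, I, H, e, hI, he⟩ := exists_sigma_sum_equiv h mk_subgroup_le_continuum hΩ (mk_out 𝔠)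
  have hblocks := Realizes.sigma fun j =>
    hC.realizes_sigma_quotient (hI j) (mk_out 𝔠) (fun x => h (e ⟨j, x⟩)) (he j)
  refine (hblocks.of_equiv ((Equiv.sigmaAssoc fun j x => FreeGroup ℕ ⧸ h (e ⟨j, x⟩)).symm.trans
    (Equiv.sigmaCongrLeft (β := fun ω => FreeGroup ℕ ⧸ h ω) e)) ?_).of_equiv eX.symm ?_
  · rintro g ⟨j, x, c⟩
    rfl
  · rintro g ⟨ω, c⟩
    exact MulAction.ofQuotientStabilizer_smul _ _ g c

theorem RealizesContinuumBlocks.isUniversal (hC : RealizesContinuumBlocks.{u} w) {X : Type u}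
    (hX : 𝔠 < #X) : IsUniversal (Equiv.Perm X) w := by
  intro g
  let := MulAction.compHom X (FreeGroup.lift g)
  obtain ⟨φ, hφ⟩ := hC.realizes hX
  exact ⟨φ, fun n => (hφ n).trans (Equiv.ext fun x => by simp [MulAction.compHom_smul_def])⟩

end

theorem stmt7_general {X Y : Type u} {A : Type*} [Countable A]
    (hcont : Cardinal.continuum < Cardinal.mk X)
    (hXY : Cardinal.mk X ≤ Cardinal.mk Y) :
    {w : ℕ → FreeSemigroup A | IsUniversal (Equiv.Perm X) w} =
      {w : ℕ → FreeSemigroup A | IsUniversal (Equiv.Perm Y) w} := by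
  have hY := hcont.trans_le hXY
  ext w
  exact ⟨fun h => (h.realizesContinuumBlocks hcont.le).isUniversal hY,
    fun h => (h.realizesContinuumBlocks hY.le).isUniversal hcont⟩

/-- If `2^ℵ₀ < |X| ≤ |Y|`, the universal sequences for `Sym(X)` and `Sym(Y)`
coincide. -/
theorem stmt7 {X Y : Type u} {A : Type*} [Infinite X] [Infinite Y] [Countable A]
    (hcont : Cardinal.continuum < Cardinal.mk X)
    (hXY : Cardinal.mk X ≤ Cardinal.mk Y) :
    {w : ℕ → FreeSemigroup A | IsUniversal (Equiv.Perm X) w} =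
      {w : ℕ → FreeSemigroup A | IsUniversal (Equiv.Perm Y) w} :=
  stmt7_general hcont hXY
end

section
/- Let S be a countable subsemigroup of I(X, α) acting on an infinite set X with |X| > 2^ℵ₀ and |X| regular, where the blocks of S on X are the sets {x·s : s ∈ S¹} for x ∈ X. Define blocks U, V to be equivalent if there is a bijection φ : U → V commuting with the action of every generator of S. Then some equivalence class of this relation has cardinality |X|. -/
/-!
The block of `x`, with the partial action of `S¹` on it, is determined up to equivalence by its
pattern: which `s, t ∈ S¹` are defined at `x` and satisfy `x·s = x·t`. As `S¹` is countable there
are at most `2^ℵ₀` patterns, so by regularity of `|X| > 2^ℵ₀` some pattern is shared by `|X|`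
points. Their blocks are pairwise equivalent, and there are `|X|` of them since each block is
countable.
-/

open Cardinal

def Block {X : Type u} (S : Set (PEquiv X X)) (x : X) : Set X :=
  insert x {y | ∃ f ∈ S, f x = some y}

def BlockRel {X : Type u} (S : Set (PEquiv X X)) (U V : Set X) : Prop :=
  ∃ φ : X → X, Set.BijOn φ U V ∧ ∀ f ∈ S, ∀ u ∈ U, (f u).map φ = f (φ u)

section DefinedEq

variable {ι α : Type*}

def DefinedEq (p : ι → Option α) (i j : ι) : Prop :=
  ∃ a, p i = some a ∧ p j = some a

lemma definedEq_self_iff {p : ι → Option α} {i : ι} : DefinedEq p i i ↔ (p i).isSome := by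
  simp [DefinedEq, Option.isSome_iff_exists]

lemma exists_bijOn_map_eq_of_definedEq_eq {p q : ι → Option α} (h : DefinedEq p = DefinedEq q) :
    ∃ φ : α → α, Set.BijOn φ {a | ∃ i, p i = some a} {b | ∃ i, q i = some b} ∧
      ∀ i, (p i).map φ = q i := by
  have hpq : ∀ i j, DefinedEq p i j ↔ DefinedEq q i j := fun i j => by rw [h]
  classical
  let φ : α → α := fun a => if ha : ∃ i, p i = some a then (q ha.choose).getD a else a
  have key : ∀ i a, p i = some a → q i = some (φ a) := by
    intro i a hi
    have ha : ∃ i, p i = some a := ⟨i, hi⟩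
    obtain ⟨b, hqi, hqj⟩ := (hpq i ha.choose).1 ⟨a, hi, ha.choose_spec⟩
    simp only [φ, dif_pos ha, hqj, Option.getD_some, hqi]
  refine ⟨φ, ⟨?_, ?_, ?_⟩, fun i => ?_⟩
  · rintro a ⟨i, hi⟩
    exact ⟨i, key i a hi⟩
  · rintro a ⟨i, hi⟩ a' ⟨j, hj⟩ hφ
    obtain ⟨b, hpi, hpj⟩ := (hpq i j).2 ⟨φ a, key i a hi, hφ ▸ key j a' hj⟩
    exact Option.some_injective _ (hi.symm.trans (hpi.trans (hpj.symm.trans hj)))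
  · rintro b ⟨i, hi⟩
    obtain ⟨a, ha⟩ := Option.isSome_iff_exists.1
      (definedEq_self_iff.1 ((hpq i i).2 (definedEq_self_iff.2 (by simp [hi]))))
    exact ⟨a, ⟨i, ha⟩, Option.some_injective _ ((key i a ha).symm.trans hi)⟩
  · cases hi : p i with
    | some a => exact (key i a hi).symm
    | none =>
      refine (Option.not_isSome_iff_eq_none.1 fun hq => ?_).symm
      simpa [hi] using definedEq_self_iff.1 ((hpq i i).2 (definedEq_self_iff.2 hq))

end DefinedEq

lemma mk_rel_le_continuum {ι : Type u} [Countable ι] : #(ι → ι → Prop) ≤ 𝔠 :=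
  calc #(ι → ι → Prop) = #(Set (ι × ι)) := mk_congr (Equiv.curry ι ι Prop).symm
    _ = 2 ^ #(ι × ι) := mk_set
    _ ≤ 2 ^ ℵ₀ := power_le_power_left two_ne_zero mk_le_aleph0
    _ = 𝔠 := two_power_aleph0

lemma mk_le_mk_of_countable_preimage {α β : Type u} (f : α → β)
    (hf : ∀ b, (f ⁻¹' {b}).Countable) (hα : ℵ₀ < #α) : #α ≤ #β := by
  have hle : #α ≤ max #β ℵ₀ := by
    have := (mk_le_mk_mul_of_mk_preimage_le f fun b => (hf b).le_aleph0).trans (mul_le_max _ _)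
    rwa [max_assoc, max_self] at this
  exact (le_max_iff.1 hle).resolve_right hα.not_ge

namespace Block

variable {X : Type u} (S : Set (PEquiv X X))

/-- The partial action of `S¹` on `X`, the adjoined identity being `none`. -/
def act : Option S → X → Option X
  | none, x => some x
  | some f, x => (f : PEquiv X X) x

lemma eq_setOf_act (x : X) : Block S x = {u | ∃ m, act S m x = some u} := by
  ext u
  constructor
  · rintro (rfl | ⟨f, hf, hfx⟩)
    exacts [⟨none, rfl⟩, ⟨some ⟨f, hf⟩, hfx⟩]
  · rintro ⟨_ | f, hm⟩
    exacts [Or.inl (Option.some_injective _ hm).symm, Or.inr ⟨f, f.2, hm⟩]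

lemma mem_self (x : X) : x ∈ Block S x := Set.mem_insert x _

lemma countable (hcount : S.Countable) (x : X) : (Block S x).Countable := by
  have := hcount.to_subtype
  rw [eq_setOf_act]
  refine (Set.countable_range fun m => (act S m x).getD x).mono ?_
  rintro u ⟨m, hm⟩
  exact ⟨m, by simp [hm]⟩

lemma countable_setOf_eq (hcount : S.Countable) (x : X) :
    {y | Block S y = Block S x}.Countable :=
  (Block.countable S hcount x).mono fun y hy => hy ▸ mem_self S y

lemma exists_act_eq_bind (hmul : ∀ f ∈ S, ∀ g ∈ S, f.trans g ∈ S) (m : Option S) (f : S) :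
    ∃ c : S, ∀ z, act S (some c) z = (act S m z).bind f := by
  cases m with
  | none => exact ⟨f, fun z => rfl⟩
  | some g => exact ⟨⟨(g : PEquiv X X).trans f, hmul _ g.2 _ f.2⟩, fun z => rfl⟩

/-- The isomorphism type of the block of `x`, with `x` as base point. -/
def pattern (x : X) : Option S → Option S → Prop :=
  DefinedEq fun m => act S m x

lemma blockRel_of_pattern_eq (hmul : ∀ f ∈ S, ∀ g ∈ S, f.trans g ∈ S) {x y : X}
    (h : pattern S x = pattern S y) : BlockRel S (Block S x) (Block S y) := by
  obtain ⟨φ, hbij, hφ⟩ := exists_bijOn_map_eq_of_definedEq_eq h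
  refine ⟨φ, by simpa only [eq_setOf_act] using hbij, fun f hf u hu => ?_⟩
  rw [eq_setOf_act] at hu
  obtain ⟨m, hm⟩ := hu
  obtain ⟨c, hc⟩ := exists_act_eq_bind S hmul m ⟨f, hf⟩
  have hmy : act S m y = some (φ u) := by rw [← hφ m, hm]; rfl
  have hfu := hφ (some c)
  rw [hc, hc, hm, hmy] at hfu
  exact hfu

end Block

theorem stmt8_general {X : Type u} (S : Set (PEquiv X X)) (hmul : ∀ f ∈ S, ∀ g ∈ S, f.trans g ∈ S)
    (hcount : S.Countable) (hcont : Cardinal.continuum < #X) (hreg : (#X).IsRegular) :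
    ∃ x : X, #{B : Set X // (∃ y : X, B = Block S y) ∧ BlockRel S (Block S x) B} = #X := by
  have := hcount.to_subtype
  have hX : ℵ₀ < #X := aleph0_lt_continuum.trans hcont
  obtain ⟨c, hc⟩ := infinite_pigeonhole_card (Block.pattern S) #X le_rfl hX.le
    (by rw [hreg.cof_ord]; exact mk_rel_le_continuum.trans_lt hcont)
  obtain ⟨x, hx⟩ : (Block.pattern S ⁻¹' {c}).Nonempty :=
    Set.nonempty_iff_ne_empty.2 fun he => by simp [he] at hc; simp [hc] at hX
  refine ⟨x, le_antisymm ?_ ?_⟩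
  · calc _ ≤ #(Set.range (Block S)) := mk_subtype_mono fun B ⟨⟨y, hy⟩, _⟩ => ⟨y, hy.symm⟩
      _ ≤ #X := mk_range_le
  · let toBlock : Block.pattern S ⁻¹' {c} → {B : Set X // (∃ y : X, B = Block S y) ∧
        BlockRel S (Block S x) B} := fun y =>
      ⟨Block S y, ⟨y, rfl⟩, Block.blockRel_of_pattern_eq S hmul (hx.trans y.2.symm)⟩
    refine hc.trans (mk_le_mk_of_countable_preimage toBlock (fun B => ?_) (hX.trans_le hc))
    obtain ⟨_, ⟨z, rfl⟩, _⟩ := B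
    exact ((Block.countable_setOf_eq S hcount z).preimage Subtype.val_injective).mono
      fun y hy => congrArg Subtype.val hy

/-- If `S` is a countable subsemigroup of `I(X, α)` on an infinite set `X` with
`2^ℵ₀ < |X|` regular, then some equivalence class of blocks has cardinality `|X|`. -/
theorem stmt8 {X : Type u} [Infinite X] (α : Cardinal.{u})
    (S : Set (PEquiv X X)) (hmul : ∀ f ∈ S, ∀ g ∈ S, f.trans g ∈ S)
    (hcount : S.Countable)
    (hα : ∀ f ∈ S, #{x : X | f x = none} ≤ α ∧ #{y : X | f.symm y = none} ≤ α)
    (hcont : Cardinal.continuum < #X) (hreg : (#X).IsRegular) :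
    ∃ x : X, #{B : Set X // (∃ y : X, B = Block S y) ∧ BlockRel S (Block S x) B} = #X :=
  stmt8_general S hmul hcount hcont hreg
end

section
/- Let w = (w₁, w₂, …) be a sequence of nonempty words over A = {a, b}, and let S_w be the least submonoid of A* satisfying: (1) if wₙ = s v u v s' with s, s' ∈ S_w and u, v ∈ A* then v ∈ S_w; (2) if wₘ = s v t and wₙ = t' v s' with m ≠ n, s, s' ∈ S_w, then v ∈ S_w. If neither the single letter a nor b belongs to S_w, then either every wₙ lies in aA*b and S_w ⊆ aA*b ∪ {ε}, or every wₙ lies in bA*a and S_w ⊆ bA*a ∪ {ε}. -/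
/-- Words over the two-letter alphabet `A = {a, b}` (the free monoid on `Bool`). -/
abbrev Word := FreeMonoid Bool

/-- The letter `a`. -/
def la : Word := FreeMonoid.of true

/-- The letter `b`. -/
def lb : Word := FreeMonoid.of false

/-- A submonoid `S` of `A*` satisfies the two closure conditions with respect to the
sequence `w`: (1) if `wₙ = s v u v s'` with `s, s' ∈ S` then `v ∈ S`; and (2) if
`wₘ = s v t` and `wₙ = t' v s'` with `m ≠ n` and `s, s' ∈ S`, then `v ∈ S`. -/
def ClosedSw (w : ℕ → Word) (S : Submonoid Word) : Prop :=
  (∀ n v u s s', s ∈ S → s' ∈ S → w n = s * v * u * v * s' → v ∈ S) ∧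
  (∀ m n v s s' t t', m ≠ n → s ∈ S → s' ∈ S → w m = s * v * t → w n = t' * v * s' →
    v ∈ S)

/-!
Taking `s = s' = 1` and a single letter for `v`, rule (1) forbids a word of the form `x u x` and
rule (2) forbids one word to begin with the letter another word ends with. A one-letter word `x`
would then force the next word to begin, and the one after to end, with `x̄`; so every `wₙ` lies
in `cₙA*c̄ₙ`, and comparing with a third word shows that `cₙ = c` is the same for all `n`. Rule
(2) with a flank `s ∈ S_w` and the partner word `c u c̄` then shows that no `wₘ` contains `s c̄`
or `c s` with `s ∈ S_w`. Hence a nonempty `v` produced by either rule begins with `c` and ends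
with `c̄`: `S_w ⊓ (cA*c̄ ∪ {ε})` satisfies both rules, and by minimality it contains `S_w`.
-/

namespace FreeMonoid

variable {α : Type*}

theorem exists_eq_of_mul {x : FreeMonoid α} (hx : x ≠ 1) : ∃ c t, x = of c * t := by
  rcases hl : toList x with _ | ⟨c, t⟩
  · exact absurd (toList.injective hl) hx
  · exact ⟨c, ofList t, toList.injective hl⟩

theorem exists_eq_mul_of {x : FreeMonoid α} (hx : x ≠ 1) : ∃ t c, x = t * of c := by
  rcases List.eq_nil_or_concat (toList x) with hl | ⟨t, c, hl⟩
  · exact absurd (toList.injective hl) hx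
  · exact ⟨ofList t, c, toList.injective (by simp [hl])⟩

theorem eq_one_or_eq_of_or_eq_of_mul_mul_of (x : FreeMonoid α) :
    x = 1 ∨ (∃ c, x = of c) ∨ ∃ c v d, x = of c * v * of d := by
  rcases hl : toList x with _ | ⟨c, t⟩
  · exact .inl (toList.injective hl)
  · rcases List.eq_nil_or_concat t with rfl | ⟨t', d, rfl⟩
    · exact .inr (.inl ⟨c, toList.injective hl⟩)
    · exact .inr (.inr ⟨c, ofList t', d, toList.injective (by simp [hl])⟩)

end FreeMonoid

def frameSubmonoid (c : Bool) : Submonoid Word where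
  carrier := {x | x = 1 ∨ ∃ v, x = FreeMonoid.of c * v * FreeMonoid.of (!c)}
  one_mem' := .inl rfl
  mul_mem' := by
    rintro x y (rfl | ⟨u, rfl⟩) (rfl | ⟨v, rfl⟩)
    · exact .inl (one_mul 1)
    · exact .inr ⟨v, one_mul _⟩
    · exact .inr ⟨u, mul_one _⟩
    · exact .inr ⟨u * FreeMonoid.of (!c) * (FreeMonoid.of c * v), by simp only [mul_assoc]⟩

namespace ClosedSw

open FreeMonoid

variable {w : ℕ → Word} {S : Submonoid Word} (hS : ClosedSw w S) (hletter : ∀ c, of c ∉ S)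
include hS hletter

theorem not_letter_flanked {m n : ℕ} (hmn : m ≠ n) {c : Bool} {s s' t t' : Word}
    (hs : s ∈ S) (hs' : s' ∈ S) (hm : w m = s * of c * t) (hn : w n = t' * of c * s') : False :=
  hletter c (hS.2 m n (of c) s s' t t' hmn hs hs' hm hn)

theorem not_first_eq_last {m n : ℕ} (hmn : m ≠ n) {c : Bool} {t t' : Word}
    (hm : w m = of c * t) (hn : w n = t' * of c) : False :=
  hS.not_letter_flanked hletter hmn S.one_mem S.one_mem (by rw [hm, one_mul])
    (by rw [hn, mul_one])

theorem ne_of_mul_of (n : ℕ) (c : Bool) (u : Word) : w n ≠ of c * u * of c := fun h =>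
  hletter c (hS.1 n (of c) u 1 1 S.one_mem S.one_mem (by rw [h, one_mul, mul_one]))

theorem ne_of (hne : ∀ n, w n ≠ 1) (n : ℕ) (c : Bool) : w n ≠ of c := by
  intro h
  obtain ⟨y, t, hy⟩ := exists_eq_of_mul (hne (n + 1))
  obtain ⟨t', z, hz⟩ := exists_eq_mul_of (hne (n + 2))
  have hyc : y ≠ c := by
    rintro rfl
    exact hS.not_first_eq_last hletter (by omega) hy (h.trans (one_mul _).symm)
  have hzc : z ≠ c := by
    rintro rfl
    exact hS.not_first_eq_last hletter (by omega) (h.trans (mul_one _).symm) hz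
  rw [Bool.eq_not_of_ne hyc, ← Bool.eq_not_of_ne hzc] at hy
  exact hS.not_first_eq_last hletter (by omega) hy hz

theorem exists_eq_of_mul_of_not (hne : ∀ n, w n ≠ 1) (n : ℕ) :
    ∃ c v, w n = of c * v * of (!c) := by
  rcases eq_one_or_eq_of_or_eq_of_mul_mul_of (w n) with h | ⟨c, h⟩ | ⟨c, v, d, h⟩
  · exact absurd h (hne n)
  · exact absurd h (hS.ne_of hletter hne n c)
  · obtain rfl : d = !c := Bool.eq_not_of_ne fun hdc => hS.ne_of_mul_of hletter n c v (hdc ▸ h)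
    exact ⟨c, v, h⟩

theorem eq_of_eq_of_mul_of_not {m n : ℕ} (hmn : m ≠ n) {c d : Bool} {u v : Word}
    (hm : w m = of c * u * of (!c)) (hn : w n = of d * v * of (!d)) : c = d :=
  Bool.ne_not.mp fun hcd =>
    hS.not_first_eq_last hletter hmn (by rw [hm, mul_assoc]) (by rw [hn, ← hcd])

theorem exists_forall_eq_of_mul_of_not (hne : ∀ n, w n ≠ 1) :
    ∃ c, ∀ n, ∃ v, w n = of c * v * of (!c) := by
  obtain ⟨c, u, h₀⟩ := hS.exists_eq_of_mul_of_not hletter hne 0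
  refine ⟨c, fun n => ?_⟩
  obtain ⟨d, v, hn⟩ := hS.exists_eq_of_mul_of_not hletter hne n
  obtain ⟨e, v', hn₁⟩ := hS.exists_eq_of_mul_of_not hletter hne (n + 1)
  obtain rfl := hS.eq_of_eq_of_mul_of_not hletter (by omega) h₀ hn₁
  obtain rfl := hS.eq_of_eq_of_mul_of_not hletter (by omega) hn hn₁
  exact ⟨v, hn⟩

variable {c : Bool} (hframe : ∀ n, ∃ v, w n = of c * v * of (!c))
include hframe

theorem ne_mul_of_not_mul {s : Word} (hs : s ∈ S) (m : ℕ) (t : Word) :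
    w m ≠ s * of (!c) * t := fun hm =>
  have ⟨v, hv⟩ := hframe (m + 1)
  hS.not_letter_flanked hletter m.lt_succ_self.ne hs S.one_mem hm (by rw [hv, mul_one])

theorem ne_mul_of_mul {s' : Word} (hs' : s' ∈ S) (n : ℕ) (t' : Word) :
    w n ≠ t' * of c * s' := fun hn =>
  have ⟨v, hv⟩ := hframe (n + 1)
  hS.not_letter_flanked hletter n.succ_ne_self S.one_mem hs' (by rw [hv, one_mul, mul_assoc]) hn

theorem mem_frameSubmonoid_of_flanked {m n : ℕ} {v s s' t t' : Word} (hs : s ∈ S)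
    (hs' : s' ∈ S) (hm : w m = s * v * t) (hn : w n = t' * v * s') : v ∈ frameSubmonoid c := by
  rcases eq_one_or_eq_of_or_eq_of_mul_mul_of v with rfl | ⟨x, rfl⟩ | ⟨x, u, y, rfl⟩
  · exact .inl rfl
  · rcases Bool.eq_or_eq_not x c with rfl | rfl
    · exact absurd hn (hS.ne_mul_of_mul hletter hframe hs' n t')
    · exact absurd hm (hS.ne_mul_of_not_mul hletter hframe hs m t)
  · obtain rfl : x = c := by
      refine (Bool.eq_or_eq_not x c).resolve_right ?_
      rintro rfl
      exact hS.ne_mul_of_not_mul hletter hframe hs m (u * of y * t) (by simp only [hm, mul_assoc])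
    obtain rfl : y = !x := by
      refine (Bool.eq_or_eq_not y x).resolve_left ?_
      rintro rfl
      exact hS.ne_mul_of_mul hletter hframe hs' n (t' * (of y * u)) (by simp only [hn, mul_assoc])
    exact .inr ⟨u, rfl⟩

theorem inf_frameSubmonoid : ClosedSw w (S ⊓ frameSubmonoid c) := by
  refine ⟨fun n v u s s' hs hs' h => ⟨hS.1 n v u s s' hs.1 hs'.1 h, ?_⟩,
    fun m n v s s' t t' hmn hs hs' hm hn => ⟨hS.2 m n v s s' t t' hmn hs.1 hs'.1 hm hn, ?_⟩⟩
  · exact hS.mem_frameSubmonoid_of_flanked hletter hframe (m := n) (n := n) hs.1 hs'.1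
      (t := u * v * s') (t' := s * v * u) (by simp only [h, mul_assoc])
      (by simp only [h, mul_assoc])
  · exact hS.mem_frameSubmonoid_of_flanked hletter hframe hs.1 hs'.1 hm hn

end ClosedSw

/-- If neither `a` nor `b` lies in `S_w`, then either every `wₙ` lies in `aA*b` and
`S_w ⊆ aA*b ∪ {ε}`, or every `wₙ` lies in `bA*a` and `S_w ⊆ bA*a ∪ {ε}`. -/
theorem stmt10 (w : ℕ → Word) (hne : ∀ n, w n ≠ 1)
    (Sw : Submonoid Word) (hcl : ClosedSw w Sw)
    (hleast : ∀ S : Submonoid Word, ClosedSw w S → Sw ≤ S)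
    (ha : la ∉ Sw) (hb : lb ∉ Sw) :
    ((∀ n, ∃ v, w n = la * v * lb) ∧ ∀ x ∈ Sw, x = 1 ∨ ∃ v, x = la * v * lb) ∨
    ((∀ n, ∃ v, w n = lb * v * la) ∧ ∀ x ∈ Sw, x = 1 ∨ ∃ v, x = lb * v * la) := by
  have hletter : ∀ c, FreeMonoid.of c ∉ Sw := by
    rintro (_ | _)
    exacts [hb, ha]
  obtain ⟨c, hc⟩ := hcl.exists_forall_eq_of_mul_of_not hletter hne
  have hsub : Sw ≤ frameSubmonoid c := fun x hx =>
    (hleast _ (hcl.inf_frameSubmonoid hletter hc) hx).2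
  cases c
  · exact .inr ⟨hc, fun x hx => hsub hx⟩
  · exact .inl ⟨hc, fun x hx => hsub hx⟩
end

section
/- Let w = (w₁, w₂, …) be a sequence of nonempty words over A = {a, b} such that no wₙ can be written as wₙ = s t v with s t ∈ S_w and t v ∈ S_w (s, t, v ∈ A*). Then for each n, writing pₙ for the longest prefix of wₙ in S_w and sₙ for the longest suffix of wₙ in S_w, there exists a nonempty word uₙ with wₙ = pₙ uₙ sₙ. -/
/-
In the free monoid two factorisations `wₙ = p r = r' s` either overlap or abut, giving
`wₙ = x t v` with `p = x t` and `s = t v` (`t` possibly empty), which the hypothesis on `w`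
excludes for `p, s ∈ S_w`, or are separated by a nonempty gap.
-/

namespace FreeMonoid

variable {α : Type*}

theorem mul_eq_mul_iff {a b c d : FreeMonoid α} :
    a * b = c * d ↔ (∃ a', c = a * a' ∧ b = a' * d) ∨ ∃ c', a = c * c' ∧ d = c' * b := by
  rw [← toList.injective.eq_iff, toList_mul, toList_mul, List.append_eq_append_iff]
  simp only [toList.surjective.exists, ← toList_mul, toList.injective.eq_iff]

theorem exists_overlap_or_exists_gap {w p s r r' : FreeMonoid α}
    (hp : w = p * r) (hs : w = r' * s) :
    (∃ x t v, w = x * t * v ∧ p = x * t ∧ s = t * v) ∨ ∃ u ≠ 1, w = p * u * s := by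
  rcases mul_eq_mul_iff.1 (hp.symm.trans hs) with ⟨u, rfl, rfl⟩ | ⟨t, rfl, rfl⟩
  · by_cases hu : u = 1
    · subst hu
      exact Or.inl ⟨p, 1, s, by simp [hp], by simp, by simp⟩
    · exact Or.inr ⟨u, hu, by rw [hp, mul_assoc]⟩
  · exact Or.inl ⟨r', t, r, by rw [hp, mul_assoc], rfl, rfl⟩

end FreeMonoid

theorem stmt11_general (w : ℕ → Word)
    (Sw : Submonoid Word)
    (hno : ∀ n s t v, w n = s * t * v → s * t ∈ Sw → t * v ∈ Sw → False)
    (n : ℕ) (p s : Word)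
    (hpmem : p ∈ Sw) (hppre : ∃ r, w n = p * r)
    (hsmem : s ∈ Sw) (hssuf : ∃ r, w n = r * s) :
    ∃ u : Word, u ≠ 1 ∧ w n = p * u * s := by
  obtain ⟨r, hr⟩ := hppre
  obtain ⟨r', hr'⟩ := hssuf
  rcases FreeMonoid.exists_overlap_or_exists_gap hr hr' with
    ⟨x, t, v, hw, rfl, rfl⟩ | ⟨u, hu, hw⟩
  · exact (hno n x t v hw hpmem hsmem).elim
  · exact ⟨u, hu, hw⟩

/-- If no `wₙ` factors as `s t v` with `s t ∈ S_w` and `t v ∈ S_w`, then the longest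
`S_w`-prefix `p` and the longest `S_w`-suffix `s` of `wₙ` leave a nonempty middle:
`wₙ = p u s` with `u ≠ ε`. -/
theorem stmt11 (w : ℕ → Word) (hne : ∀ n, w n ≠ 1)
    (Sw : Submonoid Word) (hcl : ClosedSw w Sw)
    (hleast : ∀ S : Submonoid Word, ClosedSw w S → Sw ≤ S)
    (hno : ∀ n s t v, w n = s * t * v → s * t ∈ Sw → t * v ∈ Sw → False)
    (n : ℕ) (p s : Word)
    (hpmem : p ∈ Sw) (hppre : ∃ r, w n = p * r)
    (hpmax : ∀ q ∈ Sw, (∃ r, w n = q * r) → q.length ≤ p.length)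
    (hsmem : s ∈ Sw) (hssuf : ∃ r, w n = r * s)
    (hsmax : ∀ q ∈ Sw, (∃ r, w n = r * q) → q.length ≤ s.length) :
    ∃ u : Word, u ≠ 1 ∧ w n = p * u * s :=
  stmt11_general w Sw hno n p s hpmem hppre hsmem hssuf
end

section
/- Under the hypotheses of Theorem 3.2 (with S_w ⊆ aA*b ∪ {ε} and T an irredundant generating set for S_w with ε ∉ T): for every v ∈ T there exist t, t' ∈ S_w and n, m ∈ ℕ such that t v is a prefix of pₙ and v t' is a suffix of sₘ, where pₖ and sₖ denote the longest prefix and longest suffix of wₖ belonging to S_w. -/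
/-!
Every generator `v ∈ T` arises from one of the two closure rules, so some `wₙ` begins with
`t v` and some `wₘ` ends with `v t'`, where `t, t' ∈ S_w`. Then `t v ∈ S_w` is a prefix of `wₙ`,
hence no longer than the longest such prefix `pₙ`; two prefixes of one word are comparable, so
`t v` is a prefix of `pₙ`. Symmetrically `v t'` is a suffix of `sₘ`.
-/

namespace FreeMonoid

variable {α : Type*}

theorem exists_eq_mul_of_mul_eq_mul_of_length_le_left {a b c d : FreeMonoid α}
    (h : a * b = c * d) (hl : c.length ≤ a.length) : ∃ r, a = c * r := by
  have hlist : a.toList ++ b.toList = c.toList ++ d.toList := by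
    simpa only [toList_mul] using congrArg toList h
  obtain ⟨r, hr⟩ := List.prefix_of_prefix_length_le
    (hlist ▸ List.prefix_append c.toList d.toList) (List.prefix_append a.toList b.toList) hl
  exact ⟨ofList r, toList.injective (by simpa only [toList_mul, toList_ofList] using hr.symm)⟩

theorem exists_eq_mul_of_mul_eq_mul_of_length_le_right {a b c d : FreeMonoid α}
    (h : a * b = c * d) (hl : d.length ≤ b.length) : ∃ r, b = r * d := by
  have hlist : a.toList ++ b.toList = c.toList ++ d.toList := by
    simpa only [toList_mul] using congrArg toList h
  obtain ⟨r, hr⟩ := List.suffix_of_suffix_length_le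
    (hlist ▸ List.suffix_append c.toList d.toList) (List.suffix_append a.toList b.toList) hl
  exact ⟨ofList r, toList.injective (by simpa only [toList_mul, toList_ofList] using hr.symm)⟩

end FreeMonoid

open FreeMonoid

theorem stmt13_general
    (w : ℕ → Word)
    (Sw : Submonoid Word)
    (p u s : ℕ → Word)
    (hfact : ∀ n, w n = p n * u n * s n)
    (hpmax : ∀ n, ∀ q ∈ Sw, (∃ r, w n = q * r) → q.length ≤ (p n).length)
    (hsmax : ∀ n, ∀ q ∈ Sw, (∃ r, w n = r * q) → q.length ≤ (s n).length)
    (T : Set Word)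
    (hTsub : T ⊆ (Sw : Set Word))
    (hTflank : ∀ v ∈ T,
      (∃ n x t t', t ∈ Sw ∧ t' ∈ Sw ∧ w n = t * v * x * v * t') ∨
      (∃ n m x x' t t', n ≠ m ∧ t ∈ Sw ∧ t' ∈ Sw ∧ w n = t * v * x ∧ w m = x' * v * t'))
    :
    ∀ v ∈ T, ∃ t t' n m, t ∈ Sw ∧ t' ∈ Sw ∧
      (∃ r, p n = t * v * r) ∧ (∃ r, s m = r * v * t') := by
  intro v hv
  have hflank : ∃ n m x x' t t', t ∈ Sw ∧ t' ∈ Sw ∧ w n = t * v * x ∧ w m = x' * v * t' := by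
    rcases hTflank v hv with ⟨n, x, t, t', ht, ht', hw⟩ | ⟨n, m, x, x', t, t', -, ht, ht', hn, hm⟩
    · exact ⟨n, n, x * v * t', t * v * x, t, t', ht, ht', by simp only [hw, mul_assoc], hw⟩
    · exact ⟨n, m, x, x', t, t', ht, ht', hn, hm⟩
  obtain ⟨n, m, x, x', t, t', ht, ht', hn, hm⟩ := hflank
  refine ⟨t, t', n, m, ht, ht', ?_, ?_⟩
  · have hl := hpmax n (t * v) (mul_mem ht (hTsub hv)) ⟨x, hn⟩
    exact exists_eq_mul_of_mul_eq_mul_of_length_le_left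
      (by rw [← mul_assoc, ← hfact, hn] : p n * (u n * s n) = t * v * x) hl
  · have hl := hsmax m (v * t') (mul_mem (hTsub hv) ht') ⟨x', by rw [hm, mul_assoc]⟩
    obtain ⟨r, hr⟩ := exists_eq_mul_of_mul_eq_mul_of_length_le_right
      (by rw [← hfact, hm, mul_assoc] : p m * u m * s m = x' * (v * t')) hl
    exact ⟨r, by rw [hr, mul_assoc]⟩

/-- Under the hypotheses of Theorem 3.2: every element `v` of the irredundant
generating set `T` of `S_w` occurs with `t v` a prefix of some `pₙ` and `v t`
a suffix of some `sₘ`, for `t, t ∈ S_w`. -/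
theorem stmt13
    (w : ℕ → Word) (hne : ∀ n, w n ≠ 1)
    (Sw : Submonoid Word) (hcl : ClosedSw w Sw)
    (hleast : ∀ S : Submonoid Word, ClosedSw w S → Sw ≤ S)
    (hno : ∀ n s t v, w n = s * t * v → s * t ∈ Sw → t * v ∈ Sw → False)
    (hab : ∀ n, ∃ v, w n = la * v * lb)
    (hSwab : ∀ x ∈ Sw, x = 1 ∨ ∃ v, x = la * v * lb)
    (p u s : ℕ → Word)
    (hfact : ∀ n, w n = p n * u n * s n)
    (hpmem : ∀ n, p n ∈ Sw) (hsmem : ∀ n, s n ∈ Sw)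
    (hpmax : ∀ n, ∀ q ∈ Sw, (∃ r, w n = q * r) → q.length ≤ (p n).length)
    (hsmax : ∀ n, ∀ q ∈ Sw, (∃ r, w n = r * q) → q.length ≤ (s n).length)
    (hsubw : ∀ n m, (∃ x y, w m = x * u n * y) ↔ n = m)
    (hnpsub : ∀ n, ¬ ∃ x y, p n = x * u n * y)
    (T : Set Word) (hT1 : (1 : Word) ∉ T)
    (hTsub : T ⊆ (Sw : Set Word))
    (hTgen : Submonoid.closure T = Sw)
    (hTirr : ∀ v ∈ T, v ∉ Submonoid.closure (T \ {v}))
    (hTflank : ∀ v ∈ T,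
      (∃ n x t t', t ∈ Sw ∧ t' ∈ Sw ∧ w n = t * v * x * v * t') ∨
      (∃ n m x x' t t', n ≠ m ∧ t ∈ Sw ∧ t' ∈ Sw ∧ w n = t * v * x ∧ w m = x' * v * t'))
    :
    ∀ v ∈ T, ∃ t t' n m, t ∈ Sw ∧ t' ∈ Sw ∧
      (∃ r, p n = t * v * r) ∧ (∃ r, s m = r * v * t') :=
  stmt13_general w Sw p u s hfact hpmax hsmax T hTsub hTflank
end

section
/- Under the hypotheses of Theorem 3.2: for every v, v' in the irredundant generating set T of S_w, if a nonempty prefix q of v is a suffix of v', then q = v = v'. In particular distinct elements of T have no nonempty prefix–suffix overlap, and no element of T properly overlaps itself. -/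
/-!
A word `q` that follows an `S_w`-prefix `t` of some `wₙ` (with `t q x ∈ S_w` also a prefix) and
precedes an `S_w`-suffix `t'` of some `wₘ` (with `y q t' ∈ S_w` also a suffix) lies in `S_w`:
for `n ≠ m` by closure condition (2), and for `n = m` because the two occurrences sit inside
`pₙ` and `sₙ` respectively, so they are disjoint and condition (1) applies.
If `v = q r` and `v' = r' q` with `v, v' ∈ T`, this puts first `q` and then `r` and `r'` into
`S_w`, and irredundancy of `T` forbids a factorisation of `v` or `v'` into two nontrivial
factors from `S_w`.
-/

namespace FreeMonoid

variable {α : Type*}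

theorem exists_eq_mul_of_mul_eq_mul_of_length_le {a b c d : FreeMonoid α} (h : a * b = c * d)
    (hl : a.length ≤ c.length) : ∃ e, c = a * e := by
  obtain ⟨e, he⟩ := List.prefix_of_prefix_length_le ⟨b.toList, congrArg toList h⟩
    ⟨d.toList, rfl⟩ hl
  exact ⟨ofList e, toList.injective he.symm⟩

theorem exists_eq_mul_of_mul_eq_mul_of_length_le' {a b c d : FreeMonoid α} (h : b * a = d * c)
    (hl : a.length ≤ c.length) : ∃ e, c = e * a := by
  obtain ⟨e, he⟩ := List.suffix_of_suffix_length_le ⟨b.toList, congrArg toList h⟩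
    ⟨d.toList, rfl⟩ hl
  exact ⟨ofList e, toList.injective he.symm⟩

theorem mem_closure_diff_singleton_of_length_lt {T : Set (FreeMonoid α)} {x v : FreeMonoid α}
    (hx : x ∈ Submonoid.closure T) (hlen : x.length < v.length) :
    x ∈ Submonoid.closure (T \ {v}) := by
  induction hx using Submonoid.closure_induction with
  | mem g hg =>
    exact Submonoid.subset_closure ⟨hg, fun hgv => hlen.ne (congrArg length hgv)⟩
  | one => exact one_mem _
  | mul x y _ _ ihx ihy =>
    rw [length_mul] at hlen
    exact mul_mem (ihx (by omega)) (ihy (by omega))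

theorem eq_one_or_eq_one_of_mul_notMem_closure_diff {T : Set (FreeMonoid α)}
    {x y : FreeMonoid α} (hirr : x * y ∉ Submonoid.closure (T \ {x * y}))
    (hx : x ∈ Submonoid.closure T) (hy : y ∈ Submonoid.closure T) : x = 1 ∨ y = 1 := by
  by_contra! hxy
  have hxpos : 0 < x.length := Nat.pos_of_ne_zero (length_eq_zero.not.mpr hxy.1)
  have hypos : 0 < y.length := Nat.pos_of_ne_zero (length_eq_zero.not.mpr hxy.2)
  have hlen := length_mul x y
  exact hirr (mul_mem (mem_closure_diff_singleton_of_length_lt hx (by omega))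
    (mem_closure_diff_singleton_of_length_lt hy (by omega)))

end FreeMonoid

section Flanked

variable {w : ℕ → Word} {S : Submonoid Word}

variable (w S) in
def LeftFlanked (q : Word) : Prop :=
  ∃ n t x z, t ∈ S ∧ t * q * x ∈ S ∧ w n = t * q * x * z

variable (w S) in
def RightFlanked (q : Word) : Prop :=
  ∃ m t x z, t ∈ S ∧ x * q * t ∈ S ∧ w m = z * (x * q * t)

variable (w S) in
def PrefixSuffixDisjoint : Prop :=
  ∀ n a b z z', a ∈ S → b ∈ S → w n = a * z → w n = z' * b → ∃ c, w n = a * c * b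

theorem LeftFlanked.left_of_mul {q r : Word} (h : LeftFlanked w S (q * r)) :
    LeftFlanked w S q := by
  obtain ⟨n, t, x, z, ht, hmem, hw⟩ := h
  exact ⟨n, t, r * x, z, ht, by simpa only [mul_assoc] using hmem,
    by simpa only [mul_assoc] using hw⟩

theorem LeftFlanked.right_of_mul {q r : Word} (h : LeftFlanked w S (q * r)) (hq : q ∈ S) :
    LeftFlanked w S r := by
  obtain ⟨n, t, x, z, ht, hmem, hw⟩ := h
  exact ⟨n, t * q, x, z, mul_mem ht hq, by simpa only [mul_assoc] using hmem,
    by simpa only [mul_assoc] using hw⟩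

theorem RightFlanked.right_of_mul {q r : Word} (h : RightFlanked w S (q * r)) :
    RightFlanked w S r := by
  obtain ⟨m, t, x, z, ht, hmem, hw⟩ := h
  exact ⟨m, t, x * q, z, ht, by simpa only [mul_assoc] using hmem,
    by simpa only [mul_assoc] using hw⟩

theorem RightFlanked.left_of_mul {q r : Word} (h : RightFlanked w S (q * r)) (hr : r ∈ S) :
    RightFlanked w S q := by
  obtain ⟨m, t, x, z, ht, hmem, hw⟩ := h
  exact ⟨m, r * t, x, z, mul_mem hr ht, by simpa only [mul_assoc] using hmem,
    by simpa only [mul_assoc] using hw⟩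

theorem leftFlanked_of_eq_mul_mul {v t x : Word} {n : ℕ} (hv : v ∈ S) (ht : t ∈ S)
    (hw : w n = t * v * x) : LeftFlanked w S v :=
  ⟨n, t, 1, x, ht, by simpa only [mul_one] using mul_mem ht hv,
    by simpa only [mul_one] using hw⟩

theorem rightFlanked_of_eq_mul_mul {v t x : Word} {m : ℕ} (hv : v ∈ S) (ht : t ∈ S)
    (hw : w m = x * v * t) : RightFlanked w S v :=
  ⟨m, t, 1, x, ht, by simpa only [one_mul] using mul_mem hv ht,
    by simpa only [one_mul, mul_assoc] using hw⟩

theorem prefixSuffixDisjoint_of_factorization {p u s : ℕ → Word}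
    (hfact : ∀ n, w n = p n * u n * s n)
    (hpmax : ∀ n, ∀ q ∈ S, (∃ r, w n = q * r) → q.length ≤ (p n).length)
    (hsmax : ∀ n, ∀ q ∈ S, (∃ r, w n = r * q) → q.length ≤ (s n).length) :
    PrefixSuffixDisjoint w S := by
  intro n a b z z' ha hb hpre hsuf
  obtain ⟨ρ, hρ⟩ := FreeMonoid.exists_eq_mul_of_mul_eq_mul_of_length_le
    (hpre.symm.trans (by rw [hfact n, mul_assoc])) (hpmax n a ha ⟨z, hpre⟩)
  obtain ⟨σ, hσ⟩ := FreeMonoid.exists_eq_mul_of_mul_eq_mul_of_length_le'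
    (hsuf.symm.trans (hfact n)) (hsmax n b hb ⟨z', hsuf⟩)
  exact ⟨ρ * u n * σ, by rw [hfact n, hρ, hσ]; simp only [mul_assoc]⟩

theorem mem_of_leftFlanked_of_rightFlanked (hcl : ClosedSw w S)
    (hdisj : PrefixSuffixDisjoint w S) {q : Word} (hl : LeftFlanked w S q)
    (hr : RightFlanked w S q) : q ∈ S := by
  obtain ⟨n, t, x, z, ht, htqx, hwn⟩ := hl
  obtain ⟨m, t', x', z', ht', hxqt, hwm⟩ := hr
  rcases eq_or_ne n m with rfl | hnm
  · obtain ⟨c, hc⟩ := hdisj n _ _ z z' htqx hxqt (by rw [hwn, mul_assoc]) hwm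
    exact hcl.1 n q (x * c * x') t t' ht ht' (by rw [hc]; simp only [mul_assoc])
  · exact hcl.2 n m q t t' (x * z) (z' * x') hnm ht ht'
      (by rw [hwn]; simp only [mul_assoc]) (by rw [hwm]; simp only [mul_assoc])

end Flanked

theorem stmt15_general
    (w : ℕ → Word)
    (Sw : Submonoid Word) (hcl : ClosedSw w Sw)
    (p u s : ℕ → Word)
    (hfact : ∀ n, w n = p n * u n * s n)
    (hpmax : ∀ n, ∀ q ∈ Sw, (∃ r, w n = q * r) → q.length ≤ (p n).length)
    (hsmax : ∀ n, ∀ q ∈ Sw, (∃ r, w n = r * q) → q.length ≤ (s n).length)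
    (T : Set Word)
    (hTgen : Submonoid.closure T = Sw)
    (hTirr : ∀ v ∈ T, v ∉ Submonoid.closure (T \ {v}))
    (hTflank : ∀ v ∈ T,
      (∃ n x t t', t ∈ Sw ∧ t' ∈ Sw ∧ w n = t * v * x * v * t') ∨
      (∃ n m x x' t t', n ≠ m ∧ t ∈ Sw ∧ t' ∈ Sw ∧ w n = t * v * x ∧ w m = x' * v * t'))
    :
    ∀ v ∈ T, ∀ v' ∈ T, ∀ q : Word, q ≠ 1 →
      (∃ r, v = q * r) → (∃ r', v' = r' * q) → q = v ∧ v = v' := by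
  rintro _ hv _ hv' q hq ⟨r, rfl⟩ ⟨r', rfl⟩
  have flanked : ∀ v ∈ T, LeftFlanked w Sw v ∧ RightFlanked w Sw v := by
    intro v hv
    have hvS : v ∈ Sw := hTgen ▸ Submonoid.subset_closure hv
    rcases hTflank v hv with
      ⟨n, x, t, t', ht, ht', hw⟩ | ⟨n, m, x, x', t, t', -, ht, ht', hwn, hwm⟩
    · exact ⟨leftFlanked_of_eq_mul_mul (x := x * v * t') hvS ht
          (by rw [hw]; simp only [mul_assoc]),
        rightFlanked_of_eq_mul_mul hvS ht' hw⟩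
    · exact ⟨leftFlanked_of_eq_mul_mul hvS ht hwn, rightFlanked_of_eq_mul_mul hvS ht' hwm⟩
  have hmem : ∀ {x}, LeftFlanked w Sw x → RightFlanked w Sw x → x ∈ Sw :=
    mem_of_leftFlanked_of_rightFlanked hcl
      (prefixSuffixDisjoint_of_factorization hfact hpmax hsmax)
  obtain ⟨hl, hr⟩ := flanked _ hv
  obtain ⟨hl', hr'⟩ := flanked _ hv'
  have hqS := hmem hl.left_of_mul hr'.right_of_mul
  have hrS := hmem (hl.right_of_mul hqS) hr.right_of_mul
  have hr'S := hmem hl'.left_of_mul (hr'.left_of_mul hqS)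
  rw [← hTgen] at hqS hrS hr'S
  obtain rfl : r = 1 :=
    (FreeMonoid.eq_one_or_eq_one_of_mul_notMem_closure_diff (hTirr _ hv) hqS hrS).resolve_left hq
  obtain rfl : r' = 1 :=
    (FreeMonoid.eq_one_or_eq_one_of_mul_notMem_closure_diff (hTirr _ hv') hr'S hqS).resolve_right hq
  simp

/-- Under the hypotheses of Theorem 3.2: if a nonempty prefix `q` of `v ∈ T` is a
suffix of `v ∈ T`, then `q = v = v`. -/
theorem stmt15
    (w : ℕ → Word) (hne : ∀ n, w n ≠ 1)
    (Sw : Submonoid Word) (hcl : ClosedSw w Sw)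
    (hleast : ∀ S : Submonoid Word, ClosedSw w S → Sw ≤ S)
    (hno : ∀ n s t v, w n = s * t * v → s * t ∈ Sw → t * v ∈ Sw → False)
    (hab : ∀ n, ∃ v, w n = la * v * lb)
    (hSwab : ∀ x ∈ Sw, x = 1 ∨ ∃ v, x = la * v * lb)
    (p u s : ℕ → Word)
    (hfact : ∀ n, w n = p n * u n * s n)
    (hpmem : ∀ n, p n ∈ Sw) (hsmem : ∀ n, s n ∈ Sw)
    (hpmax : ∀ n, ∀ q ∈ Sw, (∃ r, w n = q * r) → q.length ≤ (p n).length)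
    (hsmax : ∀ n, ∀ q ∈ Sw, (∃ r, w n = r * q) → q.length ≤ (s n).length)
    (hsubw : ∀ n m, (∃ x y, w m = x * u n * y) ↔ n = m)
    (hnpsub : ∀ n, ¬ ∃ x y, p n = x * u n * y)
    (T : Set Word) (hT1 : (1 : Word) ∉ T)
    (hTsub : T ⊆ (Sw : Set Word))
    (hTgen : Submonoid.closure T = Sw)
    (hTirr : ∀ v ∈ T, v ∉ Submonoid.closure (T \ {v}))
    (hTflank : ∀ v ∈ T,
      (∃ n x t t', t ∈ Sw ∧ t' ∈ Sw ∧ w n = t * v * x * v * t') ∨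
      (∃ n m x x' t t', n ≠ m ∧ t ∈ Sw ∧ t' ∈ Sw ∧ w n = t * v * x ∧ w m = x' * v * t'))
    :
    ∀ v ∈ T, ∀ v' ∈ T, ∀ q : Word, q ≠ 1 →
      (∃ r, v = q * r) → (∃ r', v' = r' * q) → q = v ∧ v = v' :=
  stmt15_general w Sw hcl p u s hfact hpmax hsmax T hTgen hTirr hTflank
end

section
/- Let X be an infinite set and let w₁, w₂, … be nonempty words over a two-letter alphabet A = {a, b} such that (i) no proper prefix of any wₙ is a suffix of any wₘ, and (ii) wₙ is not a subword of wₘ for n ≠ m. Then (w₁, w₂, …) is a universal sequence for the full transformation monoid X^X: for every sequence f₁, f₂, … ∈ X^X there is a semigroup homomorphism Φ : A⁺ → X^X with Φ(wₙ) = fₙ for all n. -/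
/-!
Since `X` is infinite, it is in bijection with `X × List α`: every point carries a stack of
letters. Let a letter act by pushing itself onto the stack and, as soon as the stack begins with a
code word `L i`, popping that word and applying `f i` to the decoded point. Composition in
`Function.End` reads a word from its last letter, so `w n` is pushed letter by letter. While a
nonempty proper suffix of `w n` sits on top, no code word can begin the stack: it would be a
factor of `w n` (excluded by infix-freeness) or would have a nonempty proper prefix that is a
suffix of `w n` (excluded by cross-bifix-freeness). With the last letter, `w n` itself, and by
infix-freeness only `w n`, begins the stack; it is popped and `f n` is applied.
-/

namespace List

variable {ι α : Type*}

def IsInfixFree (L : ι → List α) : Prop :=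
  ∀ i j, L i <:+: L j → i = j

def IsCrossBifixFree (L : ι → List α) : Prop :=
  ∀ i j (p s : List α), p ≠ [] → s ≠ [] → p ++ s = L i → ¬ p <:+ L j

variable {L : ι → List α}

theorem IsInfixFree.eq_of_prefix_append (hL : IsInfixFree L) {i j : ι} {h : List α}
    (hj : L j <+: L i ++ h) : j = i := by
  rcases prefix_or_prefix_of_prefix hj (prefix_append _ _) with hji | hij
  · exact hL j i hji.isInfix
  · exact (hL i j hij.isInfix).symm

theorem not_prefix_append_of_proper_suffix (hinf : IsInfixFree L) (hcb : IsCrossBifixFree L)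
    {i j : ι} {p t : List α} (hpt : p ++ t = L i) (hp : p ≠ []) (ht : t ≠ []) (h : List α) :
    ¬ L j <+: t ++ h := by
  have not_prefix : ¬ L j <+: t := fun hjt => by
    obtain rfl := hinf j i (hjt.isInfix.trans (hpt ▸ (suffix_append p t).isInfix))
    have := hjt.length_le
    rw [← hpt, length_append] at this
    have := length_pos_iff.2 hp
    omega
  intro hj
  rcases prefix_or_prefix_of_prefix hj (prefix_append t h) with hjt | ⟨s, hs⟩
  · exact not_prefix hjt
  · rcases eq_or_ne s [] with rfl | hs0
    · exact not_prefix (by rw [← hs, append_nil])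
    · exact hcb j i t s ht hs0 hs ⟨p, hpt⟩

end List

section Reader

variable {ι α X : Type*} (L : ι → List α) (f : ι → Function.End X) (θ : X ≃ X × List α)

open scoped Classical in
noncomputable def popCode (y : X) (u : List α) : X :=
  if H : ∃ i, L i <+: u then f H.choose (θ.symm (y, u.drop (L H.choose).length))
  else θ.symm (y, u)

noncomputable def readLetter (c : α) (x : X) : X :=
  popCode L f θ (θ x).1 (c :: (θ x).2)

noncomputable def reader : FreeMonoid α →* Function.End X :=
  FreeMonoid.lift (readLetter L f θ)

variable {L f θ}

theorem readLetter_symm_of_forall_not_prefix {c : α} {y : X} {h : List α}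
    (hc : ∀ i, ¬ L i <+: c :: h) : readLetter L f θ c (θ.symm (y, h)) = θ.symm (y, c :: h) := by
  rw [readLetter, Equiv.apply_symm_apply, popCode, dif_neg (not_exists.2 hc)]

theorem readLetter_symm_of_prefix {c : α} {y : X} {h : List α} {i : ι}
    (hi : L i <+: c :: h) (huniq : ∀ j, L j <+: c :: h → j = i) :
    readLetter L f θ c (θ.symm (y, h)) = f i (θ.symm (y, (c :: h).drop (L i).length)) := by
  have H : ∃ j, L j <+: c :: h := ⟨i, hi⟩
  rw [readLetter, Equiv.apply_symm_apply, popCode, dif_pos H, huniq _ H.choose_spec]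

theorem reader_ofList_cons (c : α) (s : List α) (x : X) :
    reader L f θ (FreeMonoid.ofList (c :: s)) x =
      readLetter L f θ c (reader L f θ (FreeMonoid.ofList s) x) := by
  rw [FreeMonoid.ofList_cons, map_mul]
  rfl

theorem reader_ofList_of_not_prefix (y : X) (h : List α) : ∀ s : List α,
    (∀ t, t ≠ [] → t <:+ s → ∀ i, ¬ L i <+: t ++ h) →
      reader L f θ (FreeMonoid.ofList s) (θ.symm (y, h)) = θ.symm (y, s ++ h)
  | [], _ => rfl
  | c :: s, hs => by
    have ih := reader_ofList_of_not_prefix y h s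
      fun t ht hts => hs t ht (hts.trans (List.suffix_cons c s))
    rw [reader_ofList_cons, ih, readLetter_symm_of_forall_not_prefix, List.cons_append]
    exact hs (c :: s) (List.cons_ne_nil c s) (List.suffix_refl _)

theorem reader_ofList_code (hinf : List.IsInfixFree L) (hcb : List.IsCrossBifixFree L) {i : ι}
    (hi : L i ≠ []) (x : X) : reader L f θ (FreeMonoid.ofList (L i)) x = f i x := by
  obtain ⟨c, s, hcs⟩ := List.exists_cons_of_ne_nil hi
  obtain ⟨⟨y, h⟩, rfl⟩ := θ.symm.surjective x
  rw [hcs, reader_ofList_cons, reader_ofList_of_not_prefix]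
  · have hcode : c :: (s ++ h) = L i ++ h := by rw [hcs, List.cons_append]
    rw [readLetter_symm_of_prefix (i := i), hcode, List.drop_left]
    · rw [hcode]; exact List.prefix_append _ _
    · intro j hj
      rw [hcode] at hj
      exact hinf.eq_of_prefix_append hj
  · rintro t ht ⟨p, hp⟩ j
    have hpt : (c :: p) ++ t = L i := by rw [hcs, ← hp, List.cons_append]
    exact List.not_prefix_append_of_proper_suffix hinf hcb hpt (List.cons_ne_nil _ _) ht _

end Reader

universe u v

namespace FreeMonoid

variable {ι α : Type*} {w : ι → FreeMonoid α}

theorem isInfixFree_toList (hw : ∀ i j, i ≠ j → ¬ ∃ x y, w j = x * w i * y) :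
    List.IsInfixFree fun i => (w i).toList := by
  rintro i j ⟨s, t, hst⟩
  by_contra hij
  exact hw i j hij ⟨ofList s, ofList t, hst.symm⟩

theorem isCrossBifixFree_toList
    (hw : ∀ i j (q : FreeMonoid α), q ≠ 1 → (∃ r, r ≠ 1 ∧ w i = q * r) → ¬ ∃ r, w j = r * q) :
    List.IsCrossBifixFree fun i => (w i).toList := by
  rintro i j p s hp hs hps ⟨r, hr⟩
  exact hw i j (ofList p) hp ⟨ofList s, hs, hps.symm⟩ ⟨ofList r, hr.symm⟩

end FreeMonoid

open Cardinal in
theorem nonempty_equiv_prod_list (X : Type u) (α : Type v) [Infinite X] [Countable α] :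
    Nonempty (X ≃ X × List α) := by
  rw [← lift_mk_eq', mk_prod, lift_mul, lift_lift, lift_lift, lift_umax]
  have hX : ℵ₀ ≤ lift.{v} #X := aleph0_le_lift.2 (aleph0_le_mk X)
  have hList : lift.{u} #(List α) ≤ lift.{v} #X := (lift_le_aleph0.2 mk_le_aleph0).trans hX
  exact (mul_eq_left hX hList (by simp)).symm

/-- Corollary 3.3: if no nonempty proper prefix of any `wₙ` is a suffix of any `wₘ`,
and `wₙ` is not a subword of `wₘ` for `n ≠ m`, then `(w₁, w₂, …)` is a universal
sequence for `X^X` for any infinite set `X`. -/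
theorem stmt16 {X : Type*} [Infinite X]
    (w : ℕ → FreeMonoid Bool) (hne : ∀ n, w n ≠ 1)
    (h1 : ∀ n m (q : FreeMonoid Bool), q ≠ 1 → (∃ r, r ≠ 1 ∧ w n = q * r) →
      ¬ ∃ r, w m = r * q)
    (h2 : ∀ n m, n ≠ m → ¬ ∃ x y, w m = x * w n * y) :
    ∀ f : ℕ → Function.End X, ∃ Φ : FreeMonoid Bool →* Function.End X,
      ∀ n, Φ (w n) = f n := by
  intro f
  obtain ⟨θ⟩ := nonempty_equiv_prod_list X Bool
  refine ⟨reader (fun n => (w n).toList) f θ, fun n => funext fun x => ?_⟩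
  exact reader_ofList_code (FreeMonoid.isInfixFree_toList h2)
    (FreeMonoid.isCrossBifixFree_toList h1) (fun h => hne n (FreeMonoid.toList.injective h)) x
end

section
/- The Banach sequence (a b a^{n+1} b²)_{n∈ℕ} over the alphabet {a, b} satisfies: no proper prefix of any word in the sequence is a suffix of any word in the sequence, and no word of the sequence is a subword of another; consequently it is a universal sequence for X^X for every infinite set X. -/
/-!
Fix a bijection `X ≃ X × A*`, so that every point of `X` carries a stack of letters. Let a
letter `c` push `c` onto the stack and then, if the stack starts with some `wᵢ`, pop `wᵢ` and
apply `fᵢ`. A word acts letter by letter from the right, so while `wₙ` is read the stack holds a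
nonempty proper suffix of `wₙ` in front of the original stack. Since no proper prefix of a word is
a suffix of a word and no word occurs inside another, such a stack never starts with a word of the
sequence, whereas after the last letter it parses uniquely as `wₙ` followed by the original stack.
Hence `wₙ` acts as `fₙ`.

The Banach word `wₙ` has the letter `b` exactly at the positions `1`, `n + 3` and `n + 4`;
comparing these positions in an overlap, or in an occurrence of one word inside another, gives a
contradiction.
-/

/-- The Banach sequence `wₙ = a b a^(n+1) b²` over `{a, b}`. -/
def banach (n : ℕ) : FreeMonoid Bool :=
  FreeMonoid.of true * FreeMonoid.of false * (FreeMonoid.of true) ^ (n + 1) *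
    (FreeMonoid.of false) ^ 2

universe u v w

open FreeMonoid

variable {α ι : Type*}

theorem FreeMonoid.mul_eq_mul_iff_s17 {a b c d : FreeMonoid α} :
    a * b = c * d ↔ (∃ t, c = a * t ∧ b = t * d) ∨ ∃ t, a = c * t ∧ d = t * b :=
  List.append_eq_append_iff

theorem FreeMonoid.mul_eq_one_iff {a b : FreeMonoid α} : a * b = 1 ↔ a = 1 ∧ b = 1 :=
  List.append_eq_nil_iff

theorem FreeMonoid.toList_pow (x : FreeMonoid α) (k : ℕ) :
    (x ^ k).toList = (List.replicate k x.toList).flatten := by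
  induction k with
  | zero => rfl
  | succ k ih =>
    rw [pow_succ, toList_mul, ih, List.replicate_succ', List.flatten_append,
      List.flatten_singleton]

theorem FreeMonoid.toList_getElem?_of_eq_mul {w x u y : FreeMonoid α} (h : w = x * u * y)
    {i : ℕ} (hi : i < u.length) : w.toList[x.length + i]? = u.toList[i]? := by
  subst h
  rw [toList_mul, toList_mul, List.append_assoc, List.getElem?_append_right (by simp [length]),
    List.getElem?_append_left (by simpa [length] using hi)]
  simp [length]

theorem Function.End.mul_apply {X : Type*} (φ ψ : Function.End X) (x : X) :
    (φ * ψ) x = φ (ψ x) :=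
  rfl

def NoPrefixSuffixOverlap (W : ι → FreeMonoid α) : Prop :=
  ∀ n m (q : FreeMonoid α), q ≠ 1 → (∃ r, r ≠ 1 ∧ W n = q * r) →
    ¬ ∃ r, W m = r * q

def NoCrossSubwords (W : ι → FreeMonoid α) : Prop :=
  ∀ n m, n ≠ m → ¬ ∃ x y, W m = x * W n * y

section Parsing

variable {W : ι → FreeMonoid α}

theorem NoCrossSubwords.eq_of_mul_eq_mul (hcross : NoCrossSubwords W) {i j : ι}
    {u v : FreeMonoid α} (h : W i * u = W j * v) : i = j ∧ u = v := by
  obtain rfl : i = j := by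
    by_contra hij
    rcases mul_eq_mul_iff_s17.1 h with ⟨t, hj, -⟩ | ⟨t, hi, -⟩
    · exact hcross i j hij ⟨1, t, by rw [hj, one_mul]⟩
    · exact hcross j i (Ne.symm hij) ⟨1, t, by rw [hi, one_mul]⟩
  exact ⟨rfl, mul_left_cancel h⟩

theorem mul_ne_mul_of_proper_suffix (hoverlap : NoPrefixSuffixOverlap W)
    (hcross : NoCrossSubwords W) {n m : ι} {p s : FreeMonoid α} (hp : p ≠ 1) (hs : s ≠ 1)
    (hn : W n = p * s) (u v : FreeMonoid α) : s * u ≠ W m * v := by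
  have hs_not_mul : ∀ t, s ≠ W m * t := by
    rintro t rfl
    obtain rfl : m = n := by
      by_contra hmn
      exact hcross m n hmn ⟨p, t, by rw [hn, mul_assoc]⟩
    have hlen := congrArg length hn
    rw [length_mul, length_mul] at hlen
    have := length_eq_zero.not.2 hp
    omega
  intro h
  rcases mul_eq_mul_iff_s17.1 h with ⟨t, hm, -⟩ | ⟨t, hs_eq, -⟩
  · by_cases ht : t = 1
    · exact hs_not_mul 1 (by rw [hm, ht, mul_one, mul_one])
    · exact hoverlap m n s hs ⟨t, ht, hm⟩ ⟨p, hn⟩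
  · exact hs_not_mul t hs_eq

end Parsing

section StackMachine

variable {X : Type*} (W : ι → FreeMonoid α) (f : ι → Function.End X)
  (e : X × FreeMonoid α ≃ X)

open Classical in
noncomputable def pushOrReduce (c : α) : Function.End X := fun x =>
  if h : ∃ p : ι × FreeMonoid α, of c * (e.symm x).2 = W p.1 * p.2 then
    f h.choose.1 (e ((e.symm x).1, h.choose.2))
  else e ((e.symm x).1, of c * (e.symm x).2)

variable {W f e}

theorem pushOrReduce_of_forall_ne {c : α} {s : FreeMonoid α} (h : ∀ i v, of c * s ≠ W i * v)
    (y : X) : pushOrReduce W f e c (e (y, s)) = e (y, of c * s) := by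
  simp only [pushOrReduce]
  rw [Equiv.symm_apply_apply, dif_neg]
  rintro ⟨p, hp⟩
  exact h _ _ hp

theorem pushOrReduce_of_eq (hcross : NoCrossSubwords W) {c : α} {s v : FreeMonoid α} {i : ι}
    (h : of c * s = W i * v) (y : X) : pushOrReduce W f e c (e (y, s)) = f i (e (y, v)) := by
  have hparse : ∃ p : ι × FreeMonoid α, of c * s = W p.1 * p.2 := ⟨(i, v), h⟩
  simp only [pushOrReduce]
  rw [Equiv.symm_apply_apply, dif_pos hparse]
  obtain ⟨hi, hv⟩ := hcross.eq_of_mul_eq_mul (hparse.choose_spec.symm.trans h)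
  rw [hi, hv]

theorem lift_pushOrReduce_of_proper_suffix (hoverlap : NoPrefixSuffixOverlap W)
    (hcross : NoCrossSubwords W) {n : ι} {s : FreeMonoid α} :
    ∀ {p : FreeMonoid α}, p ≠ 1 → W n = p * s →
      ∀ y t, lift (pushOrReduce W f e) s (e (y, t)) = e (y, s * t) := by
  induction s using FreeMonoid.inductionOn' with
  | one => intro _ _ _ _ _; rfl
  | of_mul c s ih =>
    intro p hp hn y t
    have hpc : p * of c ≠ 1 := fun h => of_ne_one c (mul_eq_one_iff.1 h).2
    rw [map_mul, lift_eval_of, Function.End.mul_apply, ih hpc (by rw [hn, mul_assoc]),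
      pushOrReduce_of_forall_ne, mul_assoc]
    intro i v hiv
    exact mul_ne_mul_of_proper_suffix hoverlap hcross hp
      (fun h => of_ne_one c (mul_eq_one_iff.1 h).1) hn t v (by rw [mul_assoc, hiv])

theorem lift_pushOrReduce_apply (hoverlap : NoPrefixSuffixOverlap W)
    (hcross : NoCrossSubwords W) {n : ι} (hn : W n ≠ 1) :
    lift (pushOrReduce W f e) (W n) = f n := by
  funext x
  obtain ⟨⟨y, t⟩, rfl⟩ := e.surjective x
  obtain ⟨c, s, hcs⟩ : ∃ c s, W n = of c * s := by
    cases h : W n using FreeMonoid.casesOn with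
    | one => exact absurd h hn
    | of_mul c s => exact ⟨c, s, rfl⟩
  rw [hcs, map_mul, lift_eval_of, Function.End.mul_apply,
    lift_pushOrReduce_of_proper_suffix hoverlap hcross (of_ne_one c) hcs,
    pushOrReduce_of_eq hcross (by rw [hcs, mul_assoc])]

end StackMachine

open Cardinal in
theorem nonempty_prod_freeMonoid_equiv (α : Type v) (X : Type w) [Countable α] [Infinite X] :
    Nonempty (X × FreeMonoid α ≃ X) := by
  apply lift_mk_eq'.1
  rw [mk_prod, lift_mul, lift_lift, lift_lift]
  have hX : ℵ₀ ≤ lift.{max v w} #X := aleph0_le_lift.2 (aleph0_le_mk X)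
  exact Cardinal.mul_eq_left hX ((lift_le_aleph0.2 mk_le_aleph0).trans hX) (by simp)

theorem exists_monoidHom_eq_of_noPrefixSuffixOverlap [Countable α] (X : Type*) [Infinite X]
    {W : ι → FreeMonoid α} (hW : ∀ i, W i ≠ 1) (hoverlap : NoPrefixSuffixOverlap W)
    (hcross : NoCrossSubwords W) (f : ι → Function.End X) :
    ∃ Φ : FreeMonoid α →* Function.End X, ∀ i, Φ (W i) = f i := by
  obtain ⟨e⟩ := nonempty_prod_freeMonoid_equiv α X
  exact ⟨lift (pushOrReduce W f e), fun i => lift_pushOrReduce_apply hoverlap hcross (hW i)⟩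

theorem toList_banach (n : ℕ) :
    (banach n).toList =
      true :: false :: (List.replicate (n + 1) true ++ List.replicate 2 false) := by
  simp [banach, toList_pow]

theorem length_banach (n : ℕ) : (banach n).length = n + 5 := by
  simp [length, toList_banach]

theorem banach_ne_one (n : ℕ) : banach n ≠ 1 := by
  rw [ne_eq, ← length_eq_zero, length_banach]
  omega

theorem toList_banach_getElem? (n i : ℕ) :
    (banach n).toList[i]? = if i < n + 5 then some (decide (i ≠ 1 ∧ i < n + 3)) else none := by
  rw [toList_banach]
  match i with
  | 0 => simp
  | 1 => simp
  | i + 2 =>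
    simp only [List.getElem?_cons_succ, List.getElem?_append, List.length_replicate,
      List.getElem?_replicate]
    split_ifs <;> first | rfl | omega | (simp; omega)

theorem banach_letter_iff {n m i j : ℕ} (hi : i < n + 5) (hj : j < m + 5)
    (h : (banach n).toList[i]? = (banach m).toList[j]?) :
    (i ≠ 1 ∧ i < n + 3) ↔ (j ≠ 1 ∧ j < m + 3) := by
  simpa only [toList_banach_getElem?, if_pos hi, if_pos hj, Option.some.injEq,
    decide_eq_decide] using h

theorem banach_noPrefixSuffixOverlap : NoPrefixSuffixOverlap banach := by
  rintro n m q hq ⟨r, hr, hn⟩ ⟨s, hm⟩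
  have hlen_n : q.length + r.length = n + 5 := by rw [← length_mul, ← hn, length_banach]
  have hlen_m : s.length + q.length = m + 5 := by rw [← length_mul, ← hm, length_banach]
  have hq0 := length_eq_zero.not.2 hq
  have hr0 := length_eq_zero.not.2 hr
  have letter : ∀ i < q.length,
      (i ≠ 1 ∧ i < n + 3) ↔ (s.length + i ≠ 1 ∧ s.length + i < m + 3) := by
    intro i hi
    have hn_at := toList_getElem?_of_eq_mul (by rw [hn, one_mul] : banach n = 1 * q * r) hi
    rw [length_one, zero_add] at hn_at
    exact banach_letter_iff (by omega) (by omega)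
      (hn_at.trans (toList_getElem?_of_eq_mul (by rw [hm, mul_one]) hi).symm)
  have := letter (q.length - 1) (by omega)
  have := letter (q.length - 2) (by omega)
  omega

theorem banach_noCrossSubwords : NoCrossSubwords banach := by
  rintro n m hnm ⟨x, y, hm⟩
  have hlen : x.length + (n + 5) + y.length = m + 5 := by
    rw [← length_banach n, ← length_mul, ← length_mul, ← hm, length_banach]
  have letter : ∀ i < n + 5,
      (i ≠ 1 ∧ i < n + 3) ↔ (x.length + i ≠ 1 ∧ x.length + i < m + 3) := fun i hi =>
    banach_letter_iff hi (by omega)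
      (toList_getElem?_of_eq_mul hm (by rwa [length_banach])).symm
  have := letter 1 (by omega)
  have := letter 2 (by omega)
  have := letter (n + 3) (by omega)
  omega

/-- The Banach sequence has no nonempty proper prefix of any word occurring as a
suffix of any word, no word is a subword of another, and consequently it is a
universal sequence for `X^X` for every infinite set `X`. -/
theorem stmt17 :
    (∀ n m (q : FreeMonoid Bool), q ≠ 1 → (∃ r, r ≠ 1 ∧ banach n = q * r) →
      ¬ ∃ r, banach m = r * q) ∧
    (∀ n m, n ≠ m → ¬ ∃ x y, banach m = x * banach n * y) ∧
    (∀ (X : Type u), Infinite X →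
      ∀ f : ℕ → Function.End X, ∃ Φ : FreeMonoid Bool →* Function.End X,
        ∀ n, Φ (banach n) = f n) :=
  ⟨banach_noPrefixSuffixOverlap, banach_noCrossSubwords, fun X _ f =>
    exists_monoidHom_eq_of_noPrefixSuffixOverlap X banach_ne_one banach_noPrefixSuffixOverlap
      banach_noCrossSubwords f⟩
end

section
/- For the sequence wₙ = aba(ab)^{n+1}bab over A = {a, b}, the least submonoid S_w of A* satisfying the closure conditions (1) and (2) equals the submonoid generated by the single word ab, i.e., S_w = {(ab)^k : k ≥ 0}. -/
/-- The sequence `wₙ = a b a (a b)^(n+1) b a b`. -/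
def wEx (n : ℕ) : Word := la * lb * la * (la * lb) ^ (n + 1) * lb * la * lb

/-!
Since `wₙ = a b a a b (ab)ⁿ b a b`, the factor `aa` occurs in `wₙ` exactly once, and so does
`bb` (the map reversing a word and exchanging `a ↔ b` fixes every `wₙ` and swaps the two
factors). A factor `v` that occurs twice disjointly in one `wₙ` therefore contains neither; nor
does a factor `v` common to `wₘ` and `wₙ` with `m ≠ n`, because `v` would then contain both
squares, whose distance in `wₙ` determines `n`. In both situations of the closure conditions,
`v` also starts right after a prefix `(ab)^i` and ends right before a suffix `(ab)^j`, which
forces `i, j ≤ 1`, so `v` is empty or starts with `a` and ends with `b`. An alternating such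
word is a power of `ab`, so `{(ab)^k}` is closed; conversely `ab` lies in every closed
submonoid, since it is a prefix of `w₀` and a suffix of `w₁`.
-/

namespace AbWord

open List

/-- `(ab)^k` as a list, with `a = true` and `b = false`. -/
def abPow : ℕ → List Bool
  | 0 => []
  | k + 1 => true :: false :: abPow k

def wList (n : ℕ) : List Bool := [true, false, true] ++ abPow (n + 1) ++ [false, true, false]

def dual (l : List Bool) : List Bool := (l.map not).reverse

@[simp] lemma dual_append (l₁ l₂ : List Bool) : dual (l₁ ++ l₂) = dual l₂ ++ dual l₁ := by
  simp [dual]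

lemma abPow_succ' (k : ℕ) : abPow (k + 1) = abPow k ++ [true, false] := by
  induction k with
  | zero => rfl
  | succ k ih => exact congrArg (true :: false :: ·) ih

@[simp] lemma dual_abPow (k : ℕ) : dual (abPow k) = abPow k := by
  induction k with
  | zero => rfl
  | succ k ih =>
    show dual ([true, false] ++ abPow k) = _
    rw [dual_append, ih, abPow_succ']
    rfl

lemma dual_wList (n : ℕ) : dual (wList n) = wList n := by
  simp only [wList, dual_append, dual_abPow]
  rw [abPow_succ']
  simp [dual]

lemma IsInfix.dual {l₁ l₂ : List Bool} (h : l₁ <:+: l₂) : dual l₁ <:+: dual l₂ :=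
  (h.map not).reverse

lemma head?_dual (l : List Bool) : (dual l).head? = l.getLast?.map not := by
  simp [dual]

lemma not_aa_infix_abPow_append (k : ℕ) :
    ¬ [true, true] <:+: abPow k ++ [false, true, false] := by
  induction k with
  | zero => decide
  | succ k ih => simp [abPow, infix_cons_iff, ih]

lemma eq_of_wList_eq_append_aa {n : ℕ} {X Y : List Bool} (h : wList n = X ++ true :: true :: Y) :
    X = [true, false] ∧ Y = false :: (abPow n ++ [false, true, false]) := by
  obtain rfl : X = [true, false] := by
    match X, h with
    | [], h => simp [wList, abPow] at h
    | [_], h => simp [wList, abPow] at h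
    | [_, _], h => simp_all [wList, abPow]
    | _ :: _ :: _ :: X', h =>
      refine absurd ⟨X', Y, ?_⟩ (not_aa_infix_abPow_append (n + 1))
      simp only [wList, abPow, cons_append, cons.injEq] at h
      simpa [abPow] using h.2.2.2.symm
  simp only [wList, abPow, cons_append, nil_append, cons.injEq, true_and] at h
  exact ⟨rfl, h.symm⟩

lemma eq_of_abPow_append_false {m n : ℕ} {X Y : List Bool}
    (h : abPow m ++ false :: X = abPow n ++ false :: Y) : m = n := by
  induction m generalizing n with
  | zero => cases n <;> simp_all [abPow]
  | succ m ih =>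
    cases n with
    | zero => simp [abPow] at h
    | succ n => exact congrArg (· + 1) (ih (by simpa [abPow] using h))

lemma le_one_of_wList_eq_abPow_append {n i : ℕ} {r : List Bool} (h : wList n = abPow i ++ r) :
    i ≤ 1 := by
  rcases i with _ | _ | i <;> simp_all [wList, abPow]

lemma le_one_of_wList_eq_append_abPow {n i : ℕ} {r : List Bool} (h : wList n = r ++ abPow i) :
    i ≤ 1 :=
  le_one_of_wList_eq_abPow_append (r := dual r) (by rw [← dual_wList, h, dual_append, dual_abPow])

lemma head?_ne_false_of_wList_eq {n i : ℕ} {v r : List Bool} (h : wList n = abPow i ++ v ++ r) :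
    v.head? ≠ some false := by
  have hi := le_one_of_wList_eq_abPow_append (h.trans (append_assoc _ _ _))
  interval_cases i <;> rcases v with _ | ⟨x, v⟩ <;> simp_all [wList, abPow]

lemma exists_eq_abPow_of_isChain :
    ∀ v : List Bool, v.IsChain (· ≠ ·) → v.head? ≠ some false → v.getLast? ≠ some true →
      ∃ k, v = abPow k
  | [], _, _, _ => ⟨0, rfl⟩
  | [true], _, _, h => absurd rfl h
  | false :: _, _, h, _ => absurd rfl h
  | true :: true :: _, hc, _, _ => by simp at hc
  | [true, false], _, _, _ => ⟨1, rfl⟩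
  | true :: false :: false :: _, hc, _, _ => by simp at hc
  | true :: false :: true :: v, hc, _, hl => by
    obtain ⟨k, hk⟩ := exists_eq_abPow_of_isChain (true :: v) hc.tail.tail
      (by simp) (by simpa using hl)
    exact ⟨k + 1, by rw [hk]; rfl⟩

lemma exists_eq_abPow_of_occurrences {m n i j : ℕ} {v t t' : List Bool}
    (hm : wList m = abPow i ++ v ++ t) (hn : wList n = t' ++ v ++ abPow j)
    (haa : ¬ [true, true] <:+: v) (hbb : ¬ [false, false] <:+: v) : ∃ k, v = abPow k := by
  refine exists_eq_abPow_of_isChain v ?_ (head?_ne_false_of_wList_eq hm) ?_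
  · refine isChain_iff_forall_rel_of_append_cons_cons.2 fun x y l₁ l₂ hv hxy => ?_
    subst hxy hv
    cases x
    · exact hbb ⟨l₁, l₂, by simp⟩
    · exact haa ⟨l₁, l₂, by simp⟩
  · have hn' : wList n = abPow j ++ dual v ++ dual t' := by
      rw [← dual_wList, hn]; simp [append_assoc]
    simpa [head?_dual] using head?_ne_false_of_wList_eq hn'

lemma not_aa_infix_of_wList_eq_square {n : ℕ} {s v u s' : List Bool}
    (h : wList n = s ++ v ++ u ++ v ++ s') : ¬ [true, true] <:+: v := by
  rintro ⟨p, q, rfl⟩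
  have h₁ := (eq_of_wList_eq_append_aa (X := s ++ p)
    (Y := q ++ u ++ p ++ [true, true] ++ q ++ s') (by rw [h]; simp)).1
  have h₂ := (eq_of_wList_eq_append_aa (X := s ++ p ++ [true, true] ++ q ++ u ++ p)
    (Y := q ++ s') (by rw [h]; simp)).1
  have := congrArg length (h₁.trans h₂.symm)
  simp at this

lemma not_aa_infix_of_wList_eq_of_ne {m n j : ℕ} {s v t t' : List Bool} (hmn : m ≠ n)
    (hm : wList m = s ++ v ++ t) (hn : wList n = t' ++ v ++ abPow j) :
    ¬ [true, true] <:+: v := by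
  rintro ⟨p, q, rfl⟩
  have hqt := (eq_of_wList_eq_append_aa (X := s ++ p) (Y := q ++ t) (by rw [hm]; simp)).2
  have hqj := (eq_of_wList_eq_append_aa (X := t' ++ p) (Y := q ++ abPow j) (by rw [hn]; simp)).2
  have hj : j ≤ 1 := le_one_of_wList_eq_append_abPow hn
  obtain ⟨r, rfl⟩ : ∃ r, q = false :: (abPow n ++ false :: r) := by
    interval_cases j
    · exact ⟨[true, false], by simpa [abPow] using hqj⟩
    · exact ⟨[], append_cancel_right (bs := abPow 1) (by simpa [abPow] using hqj)⟩
  exact hmn (eq_of_abPow_append_false (by simpa using hqt)).symm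

lemma exists_eq_abPow_of_wList_eq_square {n i j : ℕ} {v u : List Bool}
    (h : wList n = abPow i ++ v ++ u ++ v ++ abPow j) : ∃ k, v = abPow k := by
  have h' : wList n = abPow j ++ dual v ++ dual u ++ dual v ++ abPow i := by
    rw [← dual_wList, h]; simp [append_assoc]
  exact exists_eq_abPow_of_occurrences (i := i) (j := j) (t := u ++ v ++ abPow j)
    (t' := abPow i ++ v ++ u)
    (by rw [h]; simp) h (not_aa_infix_of_wList_eq_square h)
    (fun hbb => not_aa_infix_of_wList_eq_square h' (IsInfix.dual hbb))

lemma exists_eq_abPow_of_wList_eq_of_ne {m n i j : ℕ} {v t t' : List Bool} (hmn : m ≠ n)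
    (hm : wList m = abPow i ++ v ++ t) (hn : wList n = t' ++ v ++ abPow j) :
    ∃ k, v = abPow k := by
  have hm' : wList m = dual t ++ dual v ++ abPow i := by
    rw [← dual_wList, hm]; simp [append_assoc]
  have hn' : wList n = abPow j ++ dual v ++ dual t' := by
    rw [← dual_wList, hn]; simp [append_assoc]
  exact exists_eq_abPow_of_occurrences hm hn (not_aa_infix_of_wList_eq_of_ne hmn hm hn)
    (fun hbb => not_aa_infix_of_wList_eq_of_ne hmn.symm hn' hm' (IsInfix.dual hbb))

lemma toList_ab_pow (k : ℕ) : ((la * lb) ^ k).toList = abPow k := by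
  induction k with
  | zero => rfl
  | succ k ih => rw [pow_succ', FreeMonoid.toList_mul, ih]; rfl

lemma toList_wEx (n : ℕ) : (wEx n).toList = wList n := by
  simp only [wEx, FreeMonoid.toList_mul, toList_ab_pow]
  simp [la, lb, wList]

lemma mem_powers_ab_iff {x : Word} :
    x ∈ Submonoid.powers (la * lb) ↔ ∃ k, x.toList = abPow k := by
  simp only [Submonoid.mem_powers_iff, ← toList_ab_pow, FreeMonoid.toList.injective.eq_iff,
    eq_comm]

lemma closedSw_powers_ab : ClosedSw wEx (Submonoid.powers (la * lb)) := by
  simp only [ClosedSw, mem_powers_ab_iff]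
  refine ⟨fun n v u s s' ⟨i, hs⟩ ⟨j, hs'⟩ h => ?_,
    fun m n v s s' t t' hmn ⟨i, hs⟩ ⟨j, hs'⟩ hm hn => ?_⟩
  · refine exists_eq_abPow_of_wList_eq_square (n := n) (i := i) (j := j) (u := u.toList) ?_
    rw [← toList_wEx, h]
    simp [hs, hs']
  · refine exists_eq_abPow_of_wList_eq_of_ne hmn (i := i) (j := j) (t := t.toList)
      (t' := t'.toList) ?_ ?_
    · rw [← toList_wEx, hm]; simp [hs]
    · rw [← toList_wEx, hn]; simp [hs']

lemma ab_mem_of_closedSw {S : Submonoid Word} (hS : ClosedSw wEx S) : la * lb ∈ S :=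
  hS.2 0 1 _ 1 1 (la * (la * lb) * lb * la * lb) (la * lb * la * (la * lb) * la * lb * lb)
    zero_ne_one S.one_mem S.one_mem rfl rfl

end AbWord

open AbWord in
/-- For the sequence `wₙ = aba(ab)^(n+1)bab`, the least submonoid `S_w` satisfying
the closure conditions is `{(ab)^k : k ≥ 0}`. -/
theorem stmt18 (Sw : Submonoid Word) (hcl : ClosedSw wEx Sw)
    (hleast : ∀ S : Submonoid Word, ClosedSw wEx S → Sw ≤ S) :
    (Sw : Set Word) = {x | ∃ k : ℕ, (la * lb) ^ k = x} := by
  have hSw : Sw = Submonoid.powers (la * lb) :=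
    le_antisymm (hleast _ closedSw_powers_ab) (Submonoid.powers_le.2 (ab_mem_of_closedSw hcl))
  rw [hSw, Submonoid.coe_powers]
  rfl
end

section
/- Let w = (w₁, w₂, …) be a sequence of words in {a,b}⁺ satisfying the two closure conditions defining S_w, and suppose a ∈ S_w. Then b ∈ S_w and hence S_w = A*. (Consequently, under the hypothesis of Theorem 3.2 that no wₙ factors as s t v with s t, t v ∈ S_w, neither a nor b belongs to S_w.) -/
/-! Split `w₀` at its first and `w₁` at its last letter outside `S`; these letters are candidates
for `v` in condition (2). Over `{a, b}`, once one letter lies in `S` both are the other letter,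
which condition (2) would then put into `S`. So no letter lies in `S`. -/

namespace FreeMonoid

variable {α : Type*} (S : Submonoid (FreeMonoid α))

theorem mem_or_exists_first_letter_notMem (x : FreeMonoid α) :
    x ∈ S ∨ ∃ p d q, x = p * of d * q ∧ p ∈ S ∧ of d ∉ S := by
  induction x with
  | one => exact .inl S.one_mem
  | of d =>
    by_cases hd : of d ∈ S
    · exact .inl hd
    · exact .inr ⟨1, d, 1, by simp, S.one_mem, hd⟩
  | mul x y hx hy =>
    rcases hx with hx | ⟨p, d, q, rfl, hp, hd⟩
    · rcases hy with hy | ⟨p, d, q, rfl, hp, hd⟩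
      · exact .inl (S.mul_mem hx hy)
      · exact .inr ⟨x * p, d, q, by simp only [mul_assoc], S.mul_mem hx hp, hd⟩
    · exact .inr ⟨p, d, q * y, by simp only [mul_assoc], hp, hd⟩

theorem mem_or_exists_last_letter_notMem (x : FreeMonoid α) :
    x ∈ S ∨ ∃ p d q, x = p * of d * q ∧ of d ∉ S ∧ q ∈ S := by
  induction x with
  | one => exact .inl S.one_mem
  | of d =>
    by_cases hd : of d ∈ S
    · exact .inl hd
    · exact .inr ⟨1, d, 1, by simp, hd, S.one_mem⟩
  | mul x y hx hy =>
    rcases hy with hy | ⟨p, d, q, rfl, hd, hq⟩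
    · rcases hx with hx | ⟨p, d, q, rfl, hd, hq⟩
      · exact .inl (S.mul_mem hx hy)
      · exact .inr ⟨p, d, q * y, by simp only [mul_assoc], hd, S.mul_mem hq hy⟩
    · exact .inr ⟨x * p, d, q, by simp only [mul_assoc], hd, hq⟩

end FreeMonoid

theorem ClosedSw.letter_notMem {w : ℕ → Word} {S : Submonoid Word} (hcl : ClosedSw w S)
    (h₀ : w 0 ∉ S) (h₁ : w 1 ∉ S) (c : Bool) : FreeMonoid.of c ∉ S := by
  intro hc
  obtain hw₀ | ⟨s, d, t, hw₀, hs, hd⟩ :=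
    FreeMonoid.mem_or_exists_first_letter_notMem S (w 0)
  · exact h₀ hw₀
  obtain hw₁ | ⟨t', e, s', hw₁, he, hs'⟩ :=
    FreeMonoid.mem_or_exists_last_letter_notMem S (w 1)
  · exact h₁ hw₁
  have hde : d = e := by
    cases c <;> cases d <;> cases e <;> simp_all
  subst hde
  exact hd (hcl.2 0 1 _ s s' t t' zero_ne_one hs hs' hw₀ hw₁)

theorem stmt19_general (w : ℕ → Word)
    (Sw : Submonoid Word) (hcl : ClosedSw w Sw)
    (hno : ∀ n s t v, w n = s * t * v → s * t ∈ Sw → t * v ∈ Sw → False) :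
    (la ∈ Sw → lb ∈ Sw ∧ Sw = ⊤) ∧ la ∉ Sw ∧ lb ∉ Sw := by
  have hw : ∀ n, w n ∉ Sw := fun n hn =>
    hno n (w n) 1 1 (by simp) (by simpa using hn) (by simp)
  have ha : la ∉ Sw := hcl.letter_notMem (hw 0) (hw 1) true
  exact ⟨fun h => absurd h ha, ha, hcl.letter_notMem (hw 0) (hw 1) false⟩

/-- If `a ∈ S_w` then `b ∈ S_w` and `S_w = A*`; consequently, under the hypothesis
of Theorem 3.2 that no `wₙ` factors as `s t v` with `s t, t v ∈ S_w`, neither `a`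
nor `b` belongs to `S_w`. -/
theorem stmt19 (w : ℕ → Word) (hne : ∀ n, w n ≠ 1)
    (Sw : Submonoid Word) (hcl : ClosedSw w Sw)
    (hleast : ∀ S : Submonoid Word, ClosedSw w S → Sw ≤ S)
    (hno : ∀ n s t v, w n = s * t * v → s * t ∈ Sw → t * v ∈ Sw → False) :
    (la ∈ Sw → lb ∈ Sw ∧ Sw = ⊤) ∧ la ∉ Sw ∧ lb ∉ Sw :=
  stmt19_general w Sw hcl hno
end
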